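/- arXiv:1510.07117 — 8 statements merged into one kernel-verified Lean document; each statement's English description precedes it below -/
import Mathlib

section
/- Let u : V → ℝ be a positive function. Then for every vertex x ∈ V, Γ(√u)(x)/u(x) − Δu(x)/(2u(x)) ≤ D_μ, where √u denotes the function x ↦ √(u(x)). -/
open Finset

/-- The μ-Laplacian on a finite weighted graph:
`Δf(x) = (1/μ(x)) ∑_y w(x,y) (f(y) - f(x))`. -/
noncomputable def graphLap {V : Type*} [Fintype V] (w : V → V → ℝ) (μ : V → ℝ)
    (f : V → ℝ) (x : V) : ℝ :=
  (1 / μ x) * ∑ y, w x y * (f y - f x)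

/-- The gradient form:
`Γ(f,g)(x) = (1/(2μ(x))) ∑_y w(x,y) (f(y) - f(x)) (g(y) - g(x))`. -/
noncomputable def graphGamma {V : Type*} [Fintype V] (w : V → V → ℝ) (μ : V → ℝ)
    (f g : V → ℝ) (x : V) : ℝ :=
  (1 / (2 * μ x)) * ∑ y, w x y * (f y - f x) * (g y - g x)

/-! Up to the factor `1/(2μ(x))`, the term of `Γ(√u)(x) - Δu(x)/2` at `y` is
`w(x,y) (2u(x) - 2√(u(x) u(y)))`, which is at most `2 w(x,y) u(x)` as `u ≥ 0`. Summing over `y`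
gives `Γ(√u)(x) - Δu(x)/2 ≤ u(x) deg(x)/μ(x) ≤ u(x) D_μ`. -/

theorem Real.sqrt_sub_sqrt_sq_sub_sub_le {a b : ℝ} (ha : 0 ≤ a) (hb : 0 ≤ b) :
    (√a - √b) ^ 2 - (a - b) ≤ 2 * b := by
  have hab : (√a - √b) ^ 2 - (a - b) = 2 * b - 2 * (√a * √b) := by
    rw [sub_sq, Real.sq_sqrt ha, Real.sq_sqrt hb]
    ring
  rw [hab]
  linarith [mul_nonneg (Real.sqrt_nonneg a) (Real.sqrt_nonneg b)]

section

variable {V : Type*} [Fintype V] {w : V → V → ℝ} {μ : V → ℝ}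

theorem graphGamma_self_sub_graphLap_div_two (f g : V → ℝ) (x : V) :
    graphGamma w μ f f x - graphLap w μ g x / 2
      = 1 / (2 * μ x) * ∑ y, w x y * ((f y - f x) ^ 2 - (g y - g x)) := by
  simp only [graphGamma, graphLap, mul_sum, sum_div, ← sum_sub_distrib]
  exact sum_congr rfl fun y _ => by ring

theorem graphGamma_sqrt_sub_graphLap_div_two_le (hw : ∀ x y, 0 ≤ w x y) {u : V → ℝ}
    (hu : ∀ x, 0 ≤ u x) {x : V} (hμx : 0 < μ x) :
    graphGamma w μ (fun z => √(u z)) (fun z => √(u z)) x - graphLap w μ u x / 2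
      ≤ u x * ((∑ y, w x y) / μ x) := by
  have hsum : ∑ y, w x y * ((√(u y) - √(u x)) ^ 2 - (u y - u x)) ≤ ∑ y, w x y * (2 * u x) :=
    sum_le_sum fun y _ =>
      mul_le_mul_of_nonneg_left (Real.sqrt_sub_sqrt_sq_sub_sub_le (hu y) (hu x)) (hw x y)
  calc graphGamma w μ (fun z => √(u z)) (fun z => √(u z)) x - graphLap w μ u x / 2
      = 1 / (2 * μ x) * ∑ y, w x y * ((√(u y) - √(u x)) ^ 2 - (u y - u x)) :=
        graphGamma_self_sub_graphLap_div_two _ u x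
    _ ≤ 1 / (2 * μ x) * ∑ y, w x y * (2 * u x) := by gcongr
    _ = u x * ((∑ y, w x y) / μ x) := by
        rw [← sum_mul]
        field_simp

end

theorem global_gradient_estimate_general {V : Type*} [Fintype V] [Nonempty V]
    (w : V → V → ℝ) (hw : ∀ x y, 0 ≤ w x y)
    (μ : V → ℝ) (hμ : ∀ x, 0 < μ x)
    (u : V → ℝ) (hu : ∀ x, 0 < u x) (x : V) :
    graphGamma w μ (fun z => Real.sqrt (u z)) (fun z => Real.sqrt (u z)) x / u x
      - graphLap w μ u x / (2 * u x)
      ≤ Finset.univ.sup' Finset.univ_nonempty (fun z => (∑ y, w z y) / μ z) := by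
  have hux := hu x
  have hbound := graphGamma_sqrt_sub_graphLap_div_two_le hw (fun z => (hu z).le) (hμ x)
  calc graphGamma w μ (fun z => √(u z)) (fun z => √(u z)) x / u x - graphLap w μ u x / (2 * u x)
      = (graphGamma w μ (fun z => √(u z)) (fun z => √(u z)) x - graphLap w μ u x / 2) / u x := by
        field_simp
    _ ≤ (∑ y, w x y) / μ x := by
        rw [div_le_iff₀ hux]
        linarith
    _ ≤ _ := le_sup' (fun z => (∑ y, w z y) / μ z) (mem_univ x)

/-- Global gradient estimate: for a positive function `u` on a finite weighted graph,
`Γ(√u)(x)/u(x) - Δu(x)/(2u(x)) ≤ D_μ` where `D_μ = max_x deg(x)/μ(x)`. -/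
theorem global_gradient_estimate {V : Type*} [Fintype V] [Nonempty V]
    (w : V → V → ℝ) (hw : ∀ x y, 0 ≤ w x y) (hloop : ∀ x, w x x = 0)
    (μ : V → ℝ) (hμ : ∀ x, 0 < μ x)
    (u : V → ℝ) (hu : ∀ x, 0 < u x) (x : V) :
    graphGamma w μ (fun z => Real.sqrt (u z)) (fun z => Real.sqrt (u z)) x / u x
      - graphLap w μ u x / (2 * u x)
      ≤ Finset.univ.sup' Finset.univ_nonempty (fun z => (∑ y, w z y) / μ z) :=
  global_gradient_estimate_general w hw μ hμ u hu x
end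

section
/- Let u : V → ℝ be a positive function. Then for every vertex x ∈ V, the pointwise estimate Γ(√u)(x)/u(x) − Δu(x)/(2u(x)) ≤ deg(x)/μ(x) holds, where √u denotes the function x ↦ √(u(x)). -/
open Finset

/-!
Edge by edge, `(√u(y) - √u(x))² - (u(y) - u(x)) = 2u(x) - 2√(u(x)u(y)) ≤ 2u(x)`. Weighting by
`w(x,y) ≥ 0` and summing gives `2Γ(√u)(x) - Δu(x) ≤ 2u(x) deg(x)/μ(x)`; divide by `2u(x) > 0`.
-/

lemma sqrt_sub_sqrt_mul_self_sub_sub_le {a b : ℝ} (ha : 0 ≤ a) (hb : 0 ≤ b) :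
    (√a - √b) * (√a - √b) - (a - b) ≤ 2 * b := by
  have hsa : √a * √a = a := Real.mul_self_sqrt ha
  have hsb : √b * √b = b := Real.mul_self_sqrt hb
  nlinarith [mul_nonneg (Real.sqrt_nonneg a) (Real.sqrt_nonneg b)]

section

variable {V : Type*} [Fintype V]

lemma two_mul_graphGamma_sub_graphLap (w : V → V → ℝ) (μ : V → ℝ) (f g : V → ℝ) (x : V) :
    2 * graphGamma w μ f f x - graphLap w μ g x
      = (1 / μ x) * ∑ y, w x y * ((f y - f x) * (f y - f x) - (g y - g x)) := by
  simp only [graphGamma, graphLap, mul_sum, ← sum_sub_distrib]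
  refine sum_congr rfl fun y _ => ?_
  ring

lemma two_mul_graphGamma_sqrt_sub_graphLap_le {w : V → V → ℝ} (hw : ∀ x y, 0 ≤ w x y)
    {μ u : V → ℝ} (hu : ∀ x, 0 ≤ u x) {x : V} (hμx : 0 ≤ μ x) :
    2 * graphGamma w μ (fun z => √(u z)) (fun z => √(u z)) x - graphLap w μ u x
      ≤ 2 * u x * ((∑ y, w x y) / μ x) := by
  rw [two_mul_graphGamma_sub_graphLap]
  calc (1 / μ x) * ∑ y, w x y * ((√(u y) - √(u x)) * (√(u y) - √(u x)) - (u y - u x))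
      ≤ (1 / μ x) * ∑ y, w x y * (2 * u x) := by
        gcongr with y
        exacts [hw x y, sqrt_sub_sqrt_mul_self_sub_sub_le (hu y) (hu x)]
    _ = 2 * u x * ((∑ y, w x y) / μ x) := by rw [← sum_mul]; ring

end

theorem pointwise_gradient_estimate_general {V : Type*} [Fintype V]
    (w : V → V → ℝ) (hw : ∀ x y, 0 ≤ w x y)
    (μ : V → ℝ) (hμ : ∀ x, 0 < μ x)
    (u : V → ℝ) (hu : ∀ x, 0 < u x) (x : V) :
    graphGamma w μ (fun z => Real.sqrt (u z)) (fun z => Real.sqrt (u z)) x / u x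
      - graphLap w μ u x / (2 * u x)
      ≤ (∑ y, w x y) / μ x := by
  have hux : 0 < 2 * u x := by linarith [hu x]
  have hbound := two_mul_graphGamma_sqrt_sub_graphLap_le hw (fun z => (hu z).le) (hμ x).le
  calc graphGamma w μ (fun z => √(u z)) (fun z => √(u z)) x / u x
        - graphLap w μ u x / (2 * u x)
      = (2 * graphGamma w μ (fun z => √(u z)) (fun z => √(u z)) x - graphLap w μ u x)
          / (2 * u x) := by field_simp
    _ ≤ (∑ y, w x y) / μ x := by
      rw [div_le_iff₀ hux, mul_comm _ (2 * u x)]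
      exact hbound

/-- Pointwise gradient estimate: for a positive function `u` on a finite weighted graph,
`Γ(√u)(x)/u(x) - Δu(x)/(2u(x)) ≤ deg(x)/μ(x)`. -/
theorem pointwise_gradient_estimate {V : Type*} [Fintype V] [Nonempty V]
    (w : V → V → ℝ) (hw : ∀ x y, 0 ≤ w x y) (hloop : ∀ x, w x x = 0)
    (μ : V → ℝ) (hμ : ∀ x, 0 < μ x)
    (u : V → ℝ) (hu : ∀ x, 0 < u x) (x : V) :
    graphGamma w μ (fun z => Real.sqrt (u z)) (fun z => Real.sqrt (u z)) x / u x
      - graphLap w μ u x / (2 * u x)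
      ≤ (∑ y, w x y) / μ x :=
  pointwise_gradient_estimate_general w hw μ hμ u hu x
end

section
/- Let u : V × ℝ → ℝ be a positive function such that for every x ∈ V the map t ↦ u(x,t) is differentiable and Δu(·,t)(x) = ∂_t u(x,t) for all t (i.e., u is a positive solution to the heat equation). Then for every x ∈ V and every t ∈ ℝ, Γ(√u(·,t))(x)/u(x,t) − (∂_t √(u(x,t)))/√(u(x,t)) ≤ D_μ, where ∂_t √(u(x,t)) denotes the derivative of the map t ↦ √(u(x,t)) (equivalently, this quotient equals ∂_t u(x,t)/(2u(x,t))). -/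
open Finset

lemma deriv_sqrt_div_sqrt {g : ℝ → ℝ} {t : ℝ} (hg : DifferentiableAt ℝ g t) (hpos : 0 < g t) :
    deriv (fun s => √(g s)) t / √(g t) = deriv g t / (2 * g t) := by
  rw [(hg.hasDerivAt.sqrt hpos.ne').deriv, div_div, mul_assoc, Real.mul_self_sqrt hpos.le]

section Graph

variable {V : Type*} [Fintype V] {w : V → V → ℝ} {μ : V → ℝ}

lemma graphGamma_sub_half_graphLap (f : V → ℝ) (x : V) :
    graphGamma w μ (fun z => √(f z)) (fun z => √(f z)) x - graphLap w μ f x / 2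
      = (1 / (2 * μ x)) * ∑ y, w x y *
          ((√(f y) - √(f x)) * (√(f y) - √(f x)) - (f y - f x)) := by
  simp only [graphGamma, graphLap, mul_sum, sum_div, ← sum_sub_distrib]
  refine sum_congr rfl fun y _ => ?_
  ring

lemma graphGamma_sqrt_sub_half_graphLap_le (hw : ∀ y, 0 ≤ w x y) (hμ : 0 < μ x)
    {f : V → ℝ} (hf : ∀ y, 0 ≤ f y) :
    graphGamma w μ (fun z => √(f z)) (fun z => √(f z)) x - graphLap w μ f x / 2
      ≤ (∑ y, w x y) / μ x * f x := by
  rw [graphGamma_sub_half_graphLap]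
  calc (1 / (2 * μ x)) * ∑ y, w x y * ((√(f y) - √(f x)) * (√(f y) - √(f x)) - (f y - f x))
      ≤ (1 / (2 * μ x)) * ∑ y, w x y * (2 * f x) := by
        gcongr with y
        · exact hw y
        · exact sqrt_sub_sqrt_mul_self_sub_sub_le (hf y) (hf x)
    _ = (∑ y, w x y) / μ x * f x := by
        rw [← sum_mul]
        field_simp

end Graph

theorem gradient_estimate_heat_solution_general {V : Type*} [Fintype V] [Nonempty V]
    (w : V → V → ℝ) (hw : ∀ x y, 0 ≤ w x y)
    (μ : V → ℝ) (hμ : ∀ x, 0 < μ x)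
    (u : V → ℝ → ℝ) (hu : ∀ x t, 0 < u x t)
    (hdiff : ∀ x, Differentiable ℝ (u x))
    (hheat : ∀ x t, graphLap w μ (fun z => u z t) x = deriv (u x) t)
    (x : V) (t : ℝ) :
    graphGamma w μ (fun z => Real.sqrt (u z t)) (fun z => Real.sqrt (u z t)) x / u x t
      - deriv (fun s => Real.sqrt (u x s)) t / Real.sqrt (u x t)
      ≤ Finset.univ.sup' Finset.univ_nonempty (fun z => (∑ y, w z y) / μ z) := by
  have hux := hu x t
  calc graphGamma w μ (fun z => √(u z t)) (fun z => √(u z t)) x / u x t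
        - deriv (fun s => √(u x s)) t / √(u x t)
      = (graphGamma w μ (fun z => √(u z t)) (fun z => √(u z t)) x
          - graphLap w μ (fun z => u z t) x / 2) / u x t := by
        rw [deriv_sqrt_div_sqrt (hdiff x t) hux, ← hheat]
        field_simp
    _ ≤ (∑ y, w x y) / μ x := by
        rw [div_le_iff₀ hux]
        exact graphGamma_sqrt_sub_half_graphLap_le (hw x) (hμ x) fun y => (hu y t).le
    _ ≤ _ := le_sup' (fun z => (∑ y, w z y) / μ z) (mem_univ x)

/-- Gradient estimate for positive solutions of the heat equation:
if `Δu(·,t)(x) = ∂_t u(x,t)` for all `x` and `t`, then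
`Γ(√u(·,t))(x)/u(x,t) - (∂_t √(u(x,t)))/√(u(x,t)) ≤ D_μ`. -/
theorem gradient_estimate_heat_solution {V : Type*} [Fintype V] [Nonempty V]
    (w : V → V → ℝ) (hw : ∀ x y, 0 ≤ w x y) (hloop : ∀ x, w x x = 0)
    (μ : V → ℝ) (hμ : ∀ x, 0 < μ x)
    (u : V → ℝ → ℝ) (hu : ∀ x t, 0 < u x t)
    (hdiff : ∀ x, Differentiable ℝ (u x))
    (hheat : ∀ x t, graphLap w μ (fun z => u z t) x = deriv (u x) t)
    (x : V) (t : ℝ) :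
    graphGamma w μ (fun z => Real.sqrt (u z t)) (fun z => Real.sqrt (u z t)) x / u x t
      - deriv (fun s => Real.sqrt (u x s)) t / Real.sqrt (u x t)
      ≤ Finset.univ.sup' Finset.univ_nonempty (fun z => (∑ y, w z y) / μ z) :=
  gradient_estimate_heat_solution_general w hw μ hμ u hu hdiff hheat x t
end

section
/- Assume the weights are symmetric (w(x,y) = w(y,x)) and the graph with adjacency x ∼ y iff x ≠ y and w(x,y) > 0 is connected. Let u : V × ℝ → ℝ be a positive function, differentiable in t, satisfying Δu(·,t)(x) = ∂_t u(x,t) for all x ∈ V and all t ≥ 0 (a positive solution to the heat equation). Then for all x, y ∈ V and all 0 ≤ T₁ < T₂: u(x,T₁) ≤ u(y,T₂) · exp{ 2D_μ(T₂−T₁) + (4μ_max/w_min) · (dist(x,y))²/(T₂−T₁) }, where dist(x,y) is the graph distance. -/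
/-!
Rescaling by `exp (D t)` turns a nonnegative solution of the heat equation into a function that
is nondecreasing in time at every vertex, since `Δu(z) ≥ -D u(z)`. Along an edge `z ∼ a` the
Laplacian even gives `Δu(z) ≥ (w(z,a)/μ(z)) u(a) - D u(z)`, so the rescaled `u(z)` grows at least
linearly, at a rate controlled by the (monotone) rescaled `u(a)`; this compares `u(a, t₁)` with
`u(z, t₂)`. Chaining this along a shortest path, with the time interval split into `dist(x,y)`
equal pieces, gives the inequality.
-/

open Finset

open Real

theorem graphLap_eq_sub {V : Type*} [Fintype V] (w : V → V → ℝ) (μ f : V → ℝ) (x : V) :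
    graphLap w μ f x = (∑ y, w x y * f y) / μ x - (∑ y, w x y) / μ x * f x := by
  simp only [graphLap, mul_sub, sum_sub_distrib, ← sum_mul]
  ring

theorem weight_mul_sub_le_graphLap {V : Type*} [Fintype V] {w : V → V → ℝ} {μ f : V → ℝ}
    {x : V} {D : ℝ} (hw : ∀ y, 0 ≤ w x y) (hμ : 0 < μ x) (hf : ∀ y, 0 ≤ f y)
    (hD : (∑ y, w x y) / μ x ≤ D) (a : V) :
    w x a / μ x * f a - D * f x ≤ graphLap w μ f x := by
  have hterm : w x a * f a ≤ ∑ y, w x y * f y :=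
    single_le_sum (f := fun y => w x y * f y) (fun y _ => mul_nonneg (hw y) (hf y)) (mem_univ a)
  have hdeg := mul_le_mul_of_nonneg_right hD (hf x)
  rw [graphLap_eq_sub, div_mul_eq_mul_div]
  linarith [div_le_div_of_nonneg_right hterm hμ.le]

theorem nonneg_of_degree_div_le {V : Type*} [Fintype V] {w : V → V → ℝ} {μ : V → ℝ} {x : V}
    {D : ℝ} (hw : ∀ y, 0 ≤ w x y) (hμ : 0 < μ x) (hD : (∑ y, w x y) / μ x ≤ D) : 0 ≤ D :=
  (div_nonneg (sum_nonneg fun y _ => hw y) hμ.le).trans hD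

theorem hasDerivAt_exp_mul_mul {v : ℝ → ℝ} {t : ℝ} (D : ℝ) (hv : DifferentiableAt ℝ v t) :
    HasDerivAt (fun s => exp (D * s) * v s) (exp (D * t) * (D * v t + deriv v t)) t :=
  (((hasDerivAt_id' t).const_mul D).exp.fun_mul hv.hasDerivAt).congr_deriv (by ring)

def IsHeatSolution {V : Type*} [Fintype V] (w : V → V → ℝ) (μ : V → ℝ) (u : V → ℝ → ℝ) :
    Prop :=
  (∀ x, Differentiable ℝ (u x)) ∧
    ∀ x t, 0 ≤ t → graphLap w μ (fun z => u z t) x = deriv (u x) t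

namespace IsHeatSolution

variable {V : Type*} [Fintype V] {w : V → V → ℝ} {μ : V → ℝ} {u : V → ℝ → ℝ} {D : ℝ}

theorem differentiable_exp_mul (hu : IsHeatSolution w μ u) (D : ℝ) (z : V) :
    Differentiable ℝ (fun t => exp (D * t) * u z t) :=
  fun t => (hasDerivAt_exp_mul_mul D (hu.1 z t)).differentiableAt

theorem exp_mul_weight_le_deriv_exp_mul (hu : IsHeatSolution w μ u) (hw : ∀ x y, 0 ≤ w x y)
    (hμ : ∀ x, 0 < μ x) (hu0 : ∀ x t, 0 ≤ u x t) (hD : ∀ x, (∑ y, w x y) / μ x ≤ D)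
    (z a : V) {t : ℝ} (ht : 0 ≤ t) :
    exp (D * t) * (w z a / μ z * u a t) ≤ deriv (fun s => exp (D * s) * u z s) t := by
  rw [(hasDerivAt_exp_mul_mul D (hu.1 z t)).deriv, ← hu.2 z t ht]
  gcongr
  linarith [weight_mul_sub_le_graphLap (hw z) (hμ z) (fun y => hu0 y t) (hD z) a]

theorem monotoneOn_exp_mul (hu : IsHeatSolution w μ u) (hw : ∀ x y, 0 ≤ w x y)
    (hμ : ∀ x, 0 < μ x) (hu0 : ∀ x t, 0 ≤ u x t) (hD : ∀ x, (∑ y, w x y) / μ x ≤ D) (z : V) :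
    MonotoneOn (fun t => exp (D * t) * u z t) (Set.Ici 0) := by
  have hdiff := hu.differentiable_exp_mul D z
  refine monotoneOn_of_deriv_nonneg (convex_Ici 0) hdiff.continuous.continuousOn
    hdiff.differentiableOn fun t ht => ?_
  rw [interior_Ici] at ht
  refine le_trans ?_ (hu.exp_mul_weight_le_deriv_exp_mul hw hμ hu0 hD z z (ht.le))
  exact mul_nonneg (exp_pos _).le (mul_nonneg (div_nonneg (hw z z) (hμ z).le) (hu0 z t))

theorem weight_mul_le_exp_mul_sub (hu : IsHeatSolution w μ u) (hw : ∀ x y, 0 ≤ w x y)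
    (hμ : ∀ x, 0 < μ x) (hu0 : ∀ x t, 0 ≤ u x t) (hD : ∀ x, (∑ y, w x y) / μ x ≤ D)
    (z a : V) {t₁ t₂ : ℝ} (ht₁ : 0 ≤ t₁) (h : t₁ ≤ t₂) :
    w z a / μ z * (exp (D * t₁) * u a t₁) * (t₂ - t₁) ≤
      exp (D * t₂) * u z t₂ - exp (D * t₁) * u z t₁ := by
  have hdiff := hu.differentiable_exp_mul D z
  refine (convex_Ici t₁).mul_sub_le_image_sub_of_le_deriv hdiff.continuous.continuousOn
    hdiff.differentiableOn (fun t ht => ?_) t₁ Set.self_mem_Ici t₂ h h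
  rw [interior_Ici] at ht
  have hmono : exp (D * t₁) * u a t₁ ≤ exp (D * t) * u a t :=
    hu.monotoneOn_exp_mul hw hμ hu0 hD a ht₁ (ht₁.trans (ht.le)) (ht.le)
  calc w z a / μ z * (exp (D * t₁) * u a t₁)
      ≤ w z a / μ z * (exp (D * t) * u a t) :=
        mul_le_mul_of_nonneg_left hmono (div_nonneg (hw z a) (hμ z).le)
    _ = exp (D * t) * (w z a / μ z * u a t) := by ring
    _ ≤ _ := hu.exp_mul_weight_le_deriv_exp_mul hw hμ hu0 hD z a (ht₁.trans (ht.le))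

theorem le_mul_exp_mul_sub (hu : IsHeatSolution w μ u) (hw : ∀ x y, 0 ≤ w x y)
    (hμ : ∀ x, 0 < μ x) (hu0 : ∀ x t, 0 ≤ u x t) (hD : ∀ x, (∑ y, w x y) / μ x ≤ D)
    (z : V) {t₁ t₂ : ℝ} (ht₁ : 0 ≤ t₁) (h : t₁ ≤ t₂) :
    u z t₁ ≤ u z t₂ * exp (D * (t₂ - t₁)) := by
  have hmono := hu.monotoneOn_exp_mul hw hμ hu0 hD z ht₁ (ht₁.trans h) h
  have hsplit : exp (D * t₂) = exp (D * (t₂ - t₁)) * exp (D * t₁) := by rw [← exp_add]; ring_nf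
  simp only [hsplit] at hmono
  exact le_of_mul_le_mul_left (by linarith) (exp_pos (D * t₁))

theorem le_mul_exp_mul_div_of_pos_weight (hu : IsHeatSolution w μ u) (hw : ∀ x y, 0 ≤ w x y)
    (hμ : ∀ x, 0 < μ x) (hu0 : ∀ x t, 0 ≤ u x t) (hD : ∀ x, (∑ y, w x y) / μ x ≤ D)
    {z a : V} (hza : 0 < w z a) {t₁ t₂ : ℝ} (ht₁ : 0 ≤ t₁) (h : t₁ < t₂) :
    u a t₁ ≤ u z t₂ * exp (D * (t₂ - t₁)) * (μ z / (w z a * (t₂ - t₁))) := by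
  have hgrowth := hu.weight_mul_le_exp_mul_sub hw hμ hu0 hD z a ht₁ h.le
  have hsplit : exp (D * t₂) = exp (D * (t₂ - t₁)) * exp (D * t₁) := by rw [← exp_add]; ring_nf
  have hz₁ := mul_nonneg (exp_pos (D * t₁)).le (hu0 z t₁)
  have key : w z a * (t₂ - t₁) * u a t₁ * exp (D * t₁) ≤
      μ z * (u z t₂ * exp (D * (t₂ - t₁))) * exp (D * t₁) := calc
    _ = μ z * (w z a / μ z * (exp (D * t₁) * u a t₁) * (t₂ - t₁)) := by
        field_simp [(hμ z).ne']
    _ ≤ μ z * (exp (D * t₂) * u z t₂ - exp (D * t₁) * u z t₁) := by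
        gcongr; exact (hμ z).le
    _ ≤ _ := by
        rw [hsplit]
        nlinarith [hμ z]
  rw [mul_div_assoc', le_div_iff₀ (mul_pos hza (sub_pos.2 h))]
  linarith [le_of_mul_le_mul_right key (exp_pos _)]

theorem le_mul_exp_of_le_weight (hu : IsHeatSolution w μ u) (hw : ∀ x y, 0 ≤ w x y)
    (hμ : ∀ x, 0 < μ x) (hu0 : ∀ x t, 0 ≤ u x t) (hD : ∀ x, (∑ y, w x y) / μ x ≤ D)
    {z a : V} {wmin μmax t δ : ℝ} (hwmin : 0 < wmin) (hza : wmin ≤ w z a) (hμz : μ z ≤ μmax)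
    (ht : 0 ≤ t) (hδ : 0 < δ) :
    u a t ≤ u z (t + δ) * exp (2 * D * δ + 4 * μmax / wmin / δ) := by
  have hD0 := nonneg_of_degree_div_le (hw z) (hμ z) (hD z)
  have hsharp := hu.le_mul_exp_mul_div_of_pos_weight hw hμ hu0 hD (hwmin.trans_le hza) ht
    (lt_add_of_pos_right t hδ)
  rw [add_sub_cancel_left] at hsharp
  have hμmax : 0 ≤ μmax := (hμ z).le.trans hμz
  have hratio : μ z / (w z a * δ) ≤ exp (D * δ + 4 * μmax / wmin / δ) := calc
    μ z / (w z a * δ) ≤ μmax / wmin / δ := by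
        rw [div_div]; gcongr
    _ ≤ D * δ + 4 * μmax / wmin / δ + 1 := by
        have : 0 ≤ μmax / wmin / δ := by positivity
        rw [mul_div_assoc, mul_div_assoc]
        linarith [mul_nonneg hD0 hδ.le]
    _ ≤ _ := add_one_le_exp _
  calc u a t ≤ u z (t + δ) * exp (D * δ) * (μ z / (w z a * δ)) := hsharp
    _ ≤ u z (t + δ) * exp (D * δ) * exp (D * δ + 4 * μmax / wmin / δ) :=
        mul_le_mul_of_nonneg_left hratio (mul_nonneg (hu0 z _) (exp_pos _).le)
    _ = _ := by rw [mul_assoc, ← exp_add]; ring_nf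

end IsHeatSolution

theorem SimpleGraph.Walk.le_mul_exp_length_mul {V : Type*} {G : SimpleGraph V}
    {u : V → ℝ → ℝ} {δ E : ℝ} (hδ : 0 ≤ δ)
    (hstep : ∀ a b t, G.Adj a b → 0 ≤ t → u a t ≤ u b (t + δ) * exp E) {a b : V}
    (p : G.Walk a b) {t : ℝ} (ht : 0 ≤ t) :
    u a t ≤ u b (t + p.length * δ) * exp (p.length * E) := by
  induction p generalizing t with
  | nil => simp
  | @cons a c b hac q ih =>
    calc u a t ≤ u c (t + δ) * exp E := hstep a c t hac ht
      _ ≤ u b (t + δ + q.length * δ) * exp (q.length * E) * exp E := by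
          gcongr; exact ih (by linarith)
      _ = _ := by
          rw [mul_assoc, ← exp_add, length_cons]
          push_cast
          ring_nf

theorem harnack_inequality_general {V : Type*} [Fintype V] [Nonempty V]
    (w : V → V → ℝ) (hw : ∀ x y, 0 ≤ w x y)
    (μ : V → ℝ) (hμ : ∀ x, 0 < μ x)
    (G : SimpleGraph V) (hadj : ∀ x y, G.Adj x y ↔ x ≠ y ∧ 0 < w x y)
    (hconn : G.Connected)
    (u : V → ℝ → ℝ) (hu : ∀ x t, 0 < u x t)
    (hdiff : ∀ x, Differentiable ℝ (u x))
    (hheat : ∀ x t, 0 ≤ t → graphLap w μ (fun z => u z t) x = deriv (u x) t)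
    (Dμ μmax wmin : ℝ)
    (hDμ : Dμ = Finset.univ.sup' Finset.univ_nonempty (fun z => (∑ y, w z y) / μ z))
    (hμmax : μmax = Finset.univ.sup' Finset.univ_nonempty μ)
    (hwmin : IsLeast {r : ℝ | ∃ x y, 0 < w x y ∧ w x y = r} wmin)
    (x y : V) (T₁ T₂ : ℝ) (hT₁ : 0 ≤ T₁) (hT : T₁ < T₂) :
    u x T₁ ≤ u y T₂ * Real.exp (2 * Dμ * (T₂ - T₁)
      + (4 * μmax / wmin) * (G.dist x y : ℝ) ^ 2 / (T₂ - T₁)) := by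
  have hsol : IsHeatSolution w μ u := ⟨hdiff, hheat⟩
  have hu0 : ∀ x t, 0 ≤ u x t := fun x t => (hu x t).le
  have hD : ∀ z, (∑ y, w z y) / μ z ≤ Dμ :=
    fun z => hDμ ▸ le_sup' (fun z => (∑ y, w z y) / μ z) (mem_univ z)
  obtain ⟨⟨a, b, hab, rfl⟩, hwmin_le⟩ := hwmin
  have hstep : ∀ δ, 0 < δ → ∀ a' b' t, G.Adj a' b' → 0 ≤ t →
      u a' t ≤ u b' (t + δ) * exp (2 * Dμ * δ + 4 * μmax / w a b / δ) :=
    fun δ hδ a' b' t hadj' ht => hsol.le_mul_exp_of_le_weight hw hμ hu0 hD hab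
      (hwmin_le ⟨b', a', ((hadj b' a').1 hadj'.symm).2, rfl⟩)
      (hμmax ▸ le_sup' μ (mem_univ b')) ht hδ
  rcases eq_or_ne x y with rfl | hxy
  · have hD0 := nonneg_of_degree_div_le (hw x) (hμ x) (hD x)
    calc u x T₁ ≤ u x T₂ * exp (Dμ * (T₂ - T₁)) :=
          hsol.le_mul_exp_mul_sub hw hμ hu0 hD x hT₁ hT.le
      _ ≤ _ := by
        gcongr
        · exact hu0 x T₂
        · rw [SimpleGraph.dist_self, Nat.cast_zero, zero_pow two_ne_zero, mul_zero, zero_div,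
            add_zero]
          linarith [mul_nonneg hD0 (sub_pos.2 hT).le]
  · obtain ⟨p, hp⟩ := hconn.exists_walk_length_eq_dist x y
    have hd : (0 : ℝ) < G.dist x y := by exact_mod_cast hconn.pos_dist_of_ne hxy
    have hδ : 0 < (T₂ - T₁) / G.dist x y := div_pos (sub_pos.2 hT) hd
    have hchain := p.le_mul_exp_length_mul hδ.le (hstep _ hδ) hT₁
    rw [hp] at hchain
    convert hchain using 3
    · rw [mul_div_cancel₀ _ hd.ne', add_sub_cancel]
    · field_simp

/-- Harnack inequality for positive solutions of the heat equation on a finite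
connected weighted graph: for `0 ≤ T₁ < T₂`,
`u(x,T₁) ≤ u(y,T₂) exp{2D_μ(T₂-T₁) + (4μ_max/w_min) dist(x,y)²/(T₂-T₁)}`. -/
theorem harnack_inequality {V : Type*} [Fintype V] [Nonempty V]
    (w : V → V → ℝ) (hw : ∀ x y, 0 ≤ w x y) (hloop : ∀ x, w x x = 0)
    (hsymm : ∀ x y, w x y = w y x)
    (μ : V → ℝ) (hμ : ∀ x, 0 < μ x)
    (G : SimpleGraph V) (hadj : ∀ x y, G.Adj x y ↔ x ≠ y ∧ 0 < w x y)
    (hconn : G.Connected)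
    (u : V → ℝ → ℝ) (hu : ∀ x t, 0 < u x t)
    (hdiff : ∀ x, Differentiable ℝ (u x))
    (hheat : ∀ x t, 0 ≤ t → graphLap w μ (fun z => u z t) x = deriv (u x) t)
    (Dμ μmax wmin : ℝ)
    (hDμ : Dμ = Finset.univ.sup' Finset.univ_nonempty (fun z => (∑ y, w z y) / μ z))
    (hμmax : μmax = Finset.univ.sup' Finset.univ_nonempty μ)
    (hwmin : IsLeast {r : ℝ | ∃ x y, 0 < w x y ∧ w x y = r} wmin)
    (x y : V) (T₁ T₂ : ℝ) (hT₁ : 0 ≤ T₁) (hT : T₁ < T₂) :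
    u x T₁ ≤ u y T₂ * Real.exp (2 * Dμ * (T₂ - T₁)
      + (4 * μmax / wmin) * (G.dist x y : ℝ) ^ 2 / (T₂ - T₁)) :=
  harnack_inequality_general w hw μ hμ G hadj hconn u hu hdiff hheat Dμ μmax wmin hDμ hμmax hwmin x
    y T₁ T₂ hT₁ hT
end

section
/- Assume the weights are symmetric (w(x,y) = w(y,x)). Let u : V × ℝ → ℝ be a positive function, differentiable in t, satisfying Δu(·,t)(x) = ∂_t u(x,t) for all x ∈ V and all t ≥ 0. Then for any adjacent vertices x ∼ y (i.e., w(x,y) > 0) and any 0 ≤ T₁ < T₂: u(x,T₁) ≤ u(y,T₂) · exp{ 2D_μ(T₂−T₁) + (4μ_max/w_min) · 1/(T₂−T₁) }. -/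
/-!
Multiplying by `exp (D t)` absorbs the term `-(deg a / μ a) u a` of the Laplacian: for a
nonnegative solution, `v a t = exp (D t) u a t` satisfies `∂ₜ v a ≥ (w a b / μ a) v b` for every
`b`. Hence each `v a` is nondecreasing, and along an edge `y ∼ x` the function `v y` grows at rate
at least `(w y x / μ y) v x T₁` on `[T₁, T₂]`. This gives
`u x T₁ ≤ u y T₂ · μ y / (w y x (T₂ - T₁)) · exp (D (T₂ - T₁))`, and the prefactor is absorbed into
the exponential via `a ≤ exp a`.
-/

open Finset

open Real Set

theorem mul_exp_le_exp_add (a b : ℝ) : a * exp b ≤ exp (a + b) := by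
  rw [exp_add]
  exact mul_le_mul_of_nonneg_right (by linarith [add_one_le_exp a]) (exp_pos b).le

theorem le_deriv_exp_mul {f : ℝ → ℝ} {D t g : ℝ} (hf : DifferentiableAt ℝ f t)
    (h : g - D * f t ≤ deriv f t) :
    exp (D * t) * g ≤ deriv (fun s => exp (D * s) * f s) t := by
  have hd : HasDerivAt (fun s => exp (D * s) * f s)
      (exp (D * t) * (D * 1) * f t + exp (D * t) * deriv f t) t :=
    ((hasDerivAt_id t).const_mul D).exp.mul hf.hasDerivAt
  rw [hd.deriv]
  nlinarith [exp_pos (D * t)]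

section GraphLaplacian

variable {V : Type*} [Fintype V] {w : V → V → ℝ} {μ : V → ℝ} {D : ℝ}

theorem mul_div_sub_mul_le_graphLap {f : V → ℝ} {a : V} (hw : ∀ y, 0 ≤ w a y) (hμ : 0 < μ a)
    (hf : ∀ y, 0 ≤ f y) (hD : (∑ y, w a y) / μ a ≤ D) (b : V) :
    w a b * f b / μ a - D * f a ≤ graphLap w μ f a := by
  have hsplit : graphLap w μ f a = (∑ y, w a y * f y) / μ a - (∑ y, w a y) / μ a * f a := by
    simp only [graphLap, mul_sub, sum_sub_distrib, ← sum_mul]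
    ring
  have hb : w a b * f b ≤ ∑ y, w a y * f y :=
    single_le_sum (fun y _ => mul_nonneg (hw y) (hf y)) (mem_univ b)
  rw [hsplit]
  linarith [div_le_div_of_nonneg_right hb hμ.le, mul_le_mul_of_nonneg_right hD (hf a)]

variable {u : V → ℝ → ℝ}

theorem mul_div_le_deriv_exp_mul_of_heat (hw : ∀ x y, 0 ≤ w x y) (hμ : ∀ x, 0 < μ x)
    (hu : ∀ x t, 0 ≤ u x t) (hdiff : ∀ x, Differentiable ℝ (u x))
    (hheat : ∀ x t, 0 ≤ t → graphLap w μ (fun z => u z t) x = deriv (u x) t)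
    (hD : ∀ x, (∑ y, w x y) / μ x ≤ D) (a b : V) {t : ℝ} (ht : 0 ≤ t) :
    exp (D * t) * (w a b * u b t / μ a) ≤ deriv (fun s => exp (D * s) * u a s) t :=
  le_deriv_exp_mul (hdiff a t)
    ((mul_div_sub_mul_le_graphLap (hw a) (hμ a) (fun z => hu z t) (hD a) b).trans_eq
      (hheat a t ht))

theorem monotoneOn_exp_mul_of_heat (hw : ∀ x y, 0 ≤ w x y) (hμ : ∀ x, 0 < μ x)
    (hu : ∀ x t, 0 ≤ u x t) (hdiff : ∀ x, Differentiable ℝ (u x))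
    (hheat : ∀ x t, 0 ≤ t → graphLap w μ (fun z => u z t) x = deriv (u x) t)
    (hD : ∀ x, (∑ y, w x y) / μ x ≤ D) (a : V) :
    MonotoneOn (fun s => exp (D * s) * u a s) (Ici 0) := by
  have hv : Differentiable ℝ (fun s => exp (D * s) * u a s) := by
    have := hdiff a
    fun_prop
  refine monotoneOn_of_deriv_nonneg (convex_Ici 0) hv.continuous.continuousOn
    hv.differentiableOn fun t ht => ?_
  rw [interior_Ici] at ht
  exact (mul_nonneg (exp_pos _).le (div_nonneg (mul_nonneg (hw a a) (hu a t)) (hμ a).le)).trans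
    (mul_div_le_deriv_exp_mul_of_heat hw hμ hu hdiff hheat hD a a ht.le)

theorem mul_sub_le_sub_exp_mul_of_heat (hw : ∀ x y, 0 ≤ w x y) (hμ : ∀ x, 0 < μ x)
    (hu : ∀ x t, 0 ≤ u x t) (hdiff : ∀ x, Differentiable ℝ (u x))
    (hheat : ∀ x t, 0 ≤ t → graphLap w μ (fun z => u z t) x = deriv (u x) t)
    (hD : ∀ x, (∑ y, w x y) / μ x ≤ D) (a b : V) {T₁ T₂ : ℝ} (hT₁ : 0 ≤ T₁) (hT : T₁ ≤ T₂) :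
    w b a / μ b * (exp (D * T₁) * u a T₁) * (T₂ - T₁)
      ≤ exp (D * T₂) * u b T₂ - exp (D * T₁) * u b T₁ := by
  have hv : Differentiable ℝ (fun s => exp (D * s) * u b s) := by
    have := hdiff b
    fun_prop
  refine (convex_Ici T₁).mul_sub_le_image_sub_of_le_deriv hv.continuous.continuousOn
    hv.differentiableOn (fun t ht => ?_) T₁ self_mem_Ici T₂ hT hT
  rw [interior_Ici] at ht
  have ht₀ : 0 ≤ t := hT₁.trans ht.le
  have hmono : exp (D * T₁) * u a T₁ ≤ exp (D * t) * u a t :=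
    monotoneOn_exp_mul_of_heat hw hμ hu hdiff hheat hD a hT₁ ht₀ ht.le
  calc w b a / μ b * (exp (D * T₁) * u a T₁)
      ≤ w b a / μ b * (exp (D * t) * u a t) :=
        mul_le_mul_of_nonneg_left hmono (div_nonneg (hw b a) (hμ b).le)
    _ = exp (D * t) * (w b a * u a t / μ b) := by ring
    _ ≤ _ := mul_div_le_deriv_exp_mul_of_heat hw hμ hu hdiff hheat hD b a ht₀

theorem le_mul_exp_of_heat_of_pos_weight (hw : ∀ x y, 0 ≤ w x y) (hμ : ∀ x, 0 < μ x)
    (hu : ∀ x t, 0 ≤ u x t) (hdiff : ∀ x, Differentiable ℝ (u x))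
    (hheat : ∀ x t, 0 ≤ t → graphLap w μ (fun z => u z t) x = deriv (u x) t)
    (hD : ∀ x, (∑ y, w x y) / μ x ≤ D) {a b : V} (hba : 0 < w b a) {T₁ T₂ : ℝ}
    (hT₁ : 0 ≤ T₁) (hT : T₁ < T₂) :
    u a T₁ ≤ u b T₂ * (μ b / (w b a * (T₂ - T₁)) * exp (D * (T₂ - T₁))) := by
  have hgrowth := mul_sub_le_sub_exp_mul_of_heat hw hμ hu hdiff hheat hD a b hT₁ hT.le
  have hΔ : 0 < T₂ - T₁ := sub_pos.mpr hT
  have hμb := hμ b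
  have hexp : exp (D * T₂) = exp (D * (T₂ - T₁)) * exp (D * T₁) := by
    rw [← exp_add]
    ring_nf
  have hrhs : u b T₂ * (μ b / (w b a * (T₂ - T₁)) * exp (D * (T₂ - T₁)))
      = exp (D * T₂) * u b T₂ / (w b a / μ b * exp (D * T₁) * (T₂ - T₁)) := by
    rw [hexp]
    field_simp
  rw [hrhs, le_div_iff₀ (by positivity)]
  nlinarith [mul_nonneg (exp_pos (D * T₁)).le (hu b T₁)]

end GraphLaplacian

theorem harnack_adjacent_general {V : Type*} [Fintype V] [Nonempty V]
    (w : V → V → ℝ) (hw : ∀ x y, 0 ≤ w x y)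
    (hsymm : ∀ x y, w x y = w y x)
    (μ : V → ℝ) (hμ : ∀ x, 0 < μ x)
    (u : V → ℝ → ℝ) (hu : ∀ x t, 0 < u x t)
    (hdiff : ∀ x, Differentiable ℝ (u x))
    (hheat : ∀ x t, 0 ≤ t → graphLap w μ (fun z => u z t) x = deriv (u x) t)
    (Dμ μmax wmin : ℝ)
    (hDμ : Dμ = Finset.univ.sup' Finset.univ_nonempty (fun z => (∑ y, w z y) / μ z))
    (hμmax : μmax = Finset.univ.sup' Finset.univ_nonempty μ)
    (hwmin : IsLeast {r : ℝ | ∃ x y, 0 < w x y ∧ w x y = r} wmin)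
    (x y : V) (hxy : 0 < w x y)
    (T₁ T₂ : ℝ) (hT₁ : 0 ≤ T₁) (hT : T₁ < T₂) :
    u x T₁ ≤ u y T₂ * Real.exp (2 * Dμ * (T₂ - T₁)
      + (4 * μmax / wmin) * (1 / (T₂ - T₁))) := by
  have hD : ∀ z, (∑ y, w z y) / μ z ≤ Dμ := fun z =>
    hDμ ▸ le_sup' (fun z => (∑ y, w z y) / μ z) (mem_univ z)
  have hDμ_nonneg : 0 ≤ Dμ := (div_nonneg (sum_nonneg fun z _ => hw x z) (hμ x).le).trans (hD x)
  have hΔ : 0 < T₂ - T₁ := sub_pos.mpr hT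
  have hyx : 0 < w y x := hsymm x y ▸ hxy
  have hwmin_pos : 0 < wmin := by
    obtain ⟨⟨a, b, hab, rfl⟩, -⟩ := hwmin
    exact hab
  have hconst : μ y / (w y x * (T₂ - T₁)) ≤ 4 * μmax / wmin * (1 / (T₂ - T₁)) := by
    have hμy : μ y ≤ μmax := hμmax ▸ le_sup' μ (mem_univ y)
    have hwyx : wmin ≤ w y x := hwmin.2 ⟨y, x, hyx, rfl⟩
    have hμmax_pos : 0 < μmax := (hμ y).trans_le hμy
    calc μ y / (w y x * (T₂ - T₁)) ≤ μmax / (wmin * (T₂ - T₁)) := by gcongr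
      _ ≤ 4 * μmax / wmin * (1 / (T₂ - T₁)) := by
        rw [div_mul_div_comm, mul_one]
        gcongr
        linarith
  calc u x T₁ ≤ u y T₂ * (μ y / (w y x * (T₂ - T₁)) * exp (Dμ * (T₂ - T₁))) :=
        le_mul_exp_of_heat_of_pos_weight hw hμ (fun z t => (hu z t).le) hdiff hheat hD hyx hT₁ hT
    _ ≤ u y T₂ * exp (μ y / (w y x * (T₂ - T₁)) + Dμ * (T₂ - T₁)) := by
        gcongr
        · exact (hu y T₂).le
        · exact mul_exp_le_exp_add _ _
    _ ≤ _ := mul_le_mul_of_nonneg_left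
        (exp_le_exp.mpr (by linarith [mul_nonneg hDμ_nonneg hΔ.le])) (hu y T₂).le

/-- Harnack inequality for adjacent vertices: if `x ∼ y` and `0 ≤ T₁ < T₂`, then
`u(x,T₁) ≤ u(y,T₂) exp{2D_μ(T₂-T₁) + (4μ_max/w_min)/(T₂-T₁)}`. -/
theorem harnack_adjacent {V : Type*} [Fintype V] [Nonempty V]
    (w : V → V → ℝ) (hw : ∀ x y, 0 ≤ w x y) (hloop : ∀ x, w x x = 0)
    (hsymm : ∀ x y, w x y = w y x)
    (μ : V → ℝ) (hμ : ∀ x, 0 < μ x)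
    (u : V → ℝ → ℝ) (hu : ∀ x t, 0 < u x t)
    (hdiff : ∀ x, Differentiable ℝ (u x))
    (hheat : ∀ x t, 0 ≤ t → graphLap w μ (fun z => u z t) x = deriv (u x) t)
    (Dμ μmax wmin : ℝ)
    (hDμ : Dμ = Finset.univ.sup' Finset.univ_nonempty (fun z => (∑ y, w z y) / μ z))
    (hμmax : μmax = Finset.univ.sup' Finset.univ_nonempty μ)
    (hwmin : IsLeast {r : ℝ | ∃ x y, 0 < w x y ∧ w x y = r} wmin)
    (x y : V) (hxy : 0 < w x y)
    (T₁ T₂ : ℝ) (hT₁ : 0 ≤ T₁) (hT : T₁ < T₂) :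
    u x T₁ ≤ u y T₂ * Real.exp (2 * Dμ * (T₂ - T₁)
      + (4 * μmax / wmin) * (1 / (T₂ - T₁))) :=
  harnack_adjacent_general w hw hsymm μ hμ u hu hdiff hheat Dμ μmax wmin hDμ hμmax hwmin x y hxy T₁
    T₂ hT₁ hT
end

section
/- Assume the weights are symmetric (w(x,y) = w(y,x)) and the graph with adjacency x ∼ y iff x ≠ y and w(x,y) > 0 is connected. Let p : (0,∞) × V × V → ℝ be a positive function such that for each fixed y ∈ V: (a) t ↦ p(t,x,y) is differentiable and ∂_t p(t,x,y) = Δ_x p(t,·,y)(x) for all x ∈ V and t > 0, and (b) ∑_{z∈V} μ(z) p(t,z,y) ≤ 1 for all t > 0. Then for every t > 0 and all x, y ∈ V: p(t,x,y) ≤ (1/Vol(B(x,√t))) · exp{ 4√(2 D_μ μ_max t / w_min) }, where Vol(B(x,r)) = ∑_{z : dist(x,z) ≤ r} μ(z) and dist is the graph distance. -/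
open Finset

open scoped Classical in
/-- The volume of the ball `B(x,r)` with respect to the measure `μ` and the graph
distance of `G`: `Vol(B(x,r)) = ∑_{z : dist(x,z) ≤ r} μ(z)`. -/
noncomputable def volBall {V : Type*} [Fintype V] (G : SimpleGraph V) (μ : V → ℝ)
    (x : V) (r : ℝ) : ℝ :=
  ∑ z ∈ Finset.univ.filter (fun z => (G.dist x z : ℝ) ≤ r), μ z

/-!
Write `q(t,x) = e^{D t} p(t,x,y)`. Since `Δf(x) ≥ w(x,z)/μ(x) · f(z) - D f(x)` for `f ≥ 0`,
the heat equation gives `∂_t q(t,x) ≥ w(x,z)/μ(x) · q(t,z) ≥ 0` for every `z`. Hence `q` is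
nondecreasing in `t`, and across an edge `u ∼ v` it satisfies
`q(τ + s, v) ≥ s κ q(τ, u)` with `κ = w_min / μ_max`. Chaining this along a shortest path and
padding with monotonicity, every `z` with `dist(x,z) ≤ K = ⌊√t⌋` has
`p(t + K s, z, y) ≥ (s κ e^{-D s})^K p(t,x,y)`; summing against `μ` over the ball and using the
mass bound gives `Vol(B(x,√t)) p(t,x,y) ≤ (s κ e^{-D s})^{-K}`. The choice `s κ = e^{-a}` with
`a = √(2 D_μ / κ)` makes `D s = (a²/2) e^{-a} ≤ a`, so the right side is at most `e^{2 a √t}`,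
and `a √t = √(2 D_μ μ_max t / w_min)`.
-/

section DifferentialInequality

variable {V : Type*} {c : V → V → ℝ} {q q' : ℝ → V → ℝ}

structure DerivDominatesCoupling (c : V → V → ℝ) (q q' : ℝ → V → ℝ) : Prop where
  coupling_nonneg : ∀ x z, 0 ≤ c x z
  nonneg : ∀ t, 0 < t → ∀ x, 0 ≤ q t x
  hasDerivAt : ∀ x t, 0 < t → HasDerivAt (q · x) (q' t x) t
  mul_le_deriv : ∀ t, 0 < t → ∀ x z, c x z * q t z ≤ q' t x

namespace DerivDominatesCoupling

theorem monotoneOn (h : DerivDominatesCoupling c q q') (x : V) :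
    MonotoneOn (q · x) (Set.Ioi 0) := by
  refine monotoneOn_of_hasDerivWithinAt_nonneg (convex_Ioi 0)
    (fun t ht => (h.hasDerivAt x t ht).continuousAt.continuousWithinAt)
    (fun t ht => (h.hasDerivAt x t (interior_subset ht)).hasDerivWithinAt) fun t ht => ?_
  rw [interior_Ioi] at ht
  exact (mul_nonneg (h.coupling_nonneg x x) (h.nonneg t ht x)).trans
    (h.mul_le_deriv t ht x x)

theorem mul_coupling_mul_le (h : DerivDominatesCoupling c q q') {τ s : ℝ} (hτ : 0 < τ)
    (hs : 0 ≤ s) (u v : V) : s * (c v u * q τ u) ≤ q (τ + s) v := by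
  have hpos : ∀ ξ ∈ Set.Icc τ (τ + s), 0 < ξ := fun ξ hξ => hτ.trans_le hξ.1
  have hderiv : ∀ ξ ∈ interior (Set.Icc τ (τ + s)), c v u * q τ u ≤ deriv (q · v) ξ := by
    intro ξ hξ
    have hξ' := interior_subset hξ
    rw [(h.hasDerivAt v ξ (hpos ξ hξ')).deriv]
    calc c v u * q τ u
        ≤ c v u * q ξ u := mul_le_mul_of_nonneg_left
          (h.monotoneOn u hτ (hpos ξ hξ') hξ'.1) (h.coupling_nonneg v u)
      _ ≤ q' ξ v := h.mul_le_deriv ξ (hpos ξ hξ') v u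
  have hmvt := (convex_Icc τ (τ + s)).mul_sub_le_image_sub_of_le_deriv
    (fun ξ hξ => (h.hasDerivAt v ξ (hpos ξ hξ)).continuousAt.continuousWithinAt)
    (fun ξ hξ =>
      (h.hasDerivAt v ξ (hpos ξ (interior_subset hξ))).differentiableAt.differentiableWithinAt)
    hderiv τ (Set.left_mem_Icc.2 (by linarith)) (τ + s) (Set.right_mem_Icc.2 (by linarith))
    (by linarith)
  rw [add_sub_cancel_left] at hmvt
  linarith [h.nonneg τ hτ v]

theorem pow_mul_le_of_walk (h : DerivDominatesCoupling c q q') {G : SimpleGraph V} {κ : ℝ}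
    (hκ : 0 ≤ κ) (hG : ∀ u v, G.Adj u v → κ ≤ c v u) {s : ℝ} (hs : 0 ≤ s) {u v : V}
    (W : G.Walk u v) {τ : ℝ} (hτ : 0 < τ) :
    (s * κ) ^ W.length * q τ u ≤ q (τ + W.length * s) v := by
  induction W generalizing τ with
  | nil => simp
  | @cons u v' v hadj W ih =>
    have hstep : s * κ * q τ u ≤ q (τ + s) v' :=
      calc s * κ * q τ u ≤ s * (c v' u * q τ u) := by
            rw [mul_assoc]
            exact mul_le_mul_of_nonneg_left
              (mul_le_mul_of_nonneg_right (hG u v' hadj) (h.nonneg τ hτ u)) hs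
        _ ≤ q (τ + s) v' := h.mul_coupling_mul_le hτ hs u v'
    calc (s * κ) ^ (W.cons hadj).length * q τ u
        = (s * κ) ^ W.length * (s * κ * q τ u) := by
          rw [SimpleGraph.Walk.length_cons, pow_succ]; ring
      _ ≤ (s * κ) ^ W.length * q (τ + s) v' :=
          mul_le_mul_of_nonneg_left hstep (pow_nonneg (mul_nonneg hs hκ) _)
      _ ≤ q (τ + (W.cons hadj).length * s) v := by
          convert ih (by linarith : 0 < τ + s) using 2
          rw [SimpleGraph.Walk.length_cons]; push_cast; ring

theorem pow_mul_le_of_dist_le (h : DerivDominatesCoupling c q q') {G : SimpleGraph V}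
    (hconn : G.Connected) {κ : ℝ} (hκ : 0 ≤ κ) (hG : ∀ u v, G.Adj u v → κ ≤ c v u) {s : ℝ}
    (hs : 0 ≤ s) (hsκ : s * κ ≤ 1) {t : ℝ} (ht : 0 < t) {K : ℕ} {x z : V}
    (hxz : G.dist x z ≤ K) :
    (s * κ) ^ K * q t x ≤ q (t + K * s) z := by
  obtain ⟨W, hW⟩ := hconn.exists_walk_length_eq_dist x z
  have hks : t + W.length * s ≤ t + K * s := by
    gcongr
    exact_mod_cast hW ▸ hxz
  calc (s * κ) ^ K * q t x
      ≤ (s * κ) ^ W.length * q t x := mul_le_mul_of_nonneg_right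
        (pow_le_pow_of_le_one (mul_nonneg hs hκ) hsκ (hW ▸ hxz)) (h.nonneg t ht x)
    _ ≤ q (t + W.length * s) z := h.pow_mul_le_of_walk hκ hG hs W ht
    _ ≤ q (t + K * s) z :=
        h.monotoneOn z (Set.mem_Ioi.2 (by positivity)) (Set.mem_Ioi.2 (by positivity)) hks

end DerivDominatesCoupling

end DifferentialInequality

theorem mul_exp_neg_sqrt_div_le {D κ : ℝ} (hD : 0 ≤ D) (hκ : 0 < κ) :
    D * (Real.exp (-√(2 * D / κ)) / κ) ≤ √(2 * D / κ) := by
  set a := √(2 * D / κ)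
  have ha : 0 ≤ a := Real.sqrt_nonneg _
  have hsq : a ^ 2 = 2 * D / κ := Real.sq_sqrt (by positivity)
  have hdecay : a * Real.exp (-a) ≤ 1 :=
    (Real.mul_exp_neg_le_exp_neg_one a).trans (Real.exp_le_one_iff.2 (by norm_num))
  calc D * (Real.exp (-a) / κ) = a / 2 * (a * Real.exp (-a)) := by
        field_simp; rw [hsq]; field_simp
    _ ≤ a / 2 * 1 := by gcongr
    _ ≤ a := by linarith

section WeightedGraph

variable {V : Type*} [Fintype V] {w : V → V → ℝ} {μ : V → ℝ}

theorem div_mul_le_graphLap_add {f : V → ℝ} {x : V} {D : ℝ} (hw : ∀ z, 0 ≤ w x z)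
    (hμ : 0 < μ x) (hD : (∑ z, w x z) / μ x ≤ D) (hf : ∀ z, 0 ≤ f z) (z : V) :
    w x z / μ x * f z ≤ graphLap w μ f x + D * f x := by
  have hlap : graphLap w μ f x = (∑ y, w x y * f y) / μ x - (∑ y, w x y) / μ x * f x := by
    simp only [graphLap, mul_sub, sum_sub_distrib, ← sum_mul]; ring
  have hsingle : w x z * f z / μ x ≤ (∑ y, w x y * f y) / μ x :=
    div_le_div_of_nonneg_right
      (single_le_sum (fun y _ => mul_nonneg (hw y) (hf y)) (mem_univ z)) hμ.le
  rw [hlap, div_mul_eq_mul_div]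
  linarith [mul_le_mul_of_nonneg_right hD (hf x)]

theorem derivDominatesCoupling_exp_mul {u : ℝ → V → ℝ} {D : ℝ} (hw : ∀ x z, 0 ≤ w x z)
    (hμ : ∀ x, 0 < μ x) (hD : ∀ x, (∑ z, w x z) / μ x ≤ D)
    (hu : ∀ t, 0 < t → ∀ x, 0 ≤ u t x)
    (hheat : ∀ x t, 0 < t → HasDerivAt (u · x) (graphLap w μ (u t) x) t) :
    DerivDominatesCoupling (fun x z => w x z / μ x) (fun t x => Real.exp (D * t) * u t x)
      (fun t x => Real.exp (D * t) * (graphLap w μ (u t) x + D * u t x)) where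
  coupling_nonneg x z := div_nonneg (hw x z) (hμ x).le
  nonneg t ht x := mul_nonneg (Real.exp_pos _).le (hu t ht x)
  hasDerivAt x t ht :=
    (((hasDerivAt_id t).const_mul D).exp.mul (hheat x t ht)).congr_deriv
      (by simp only [id_eq]; ring)
  mul_le_deriv t ht x z := by
    rw [mul_left_comm]
    exact mul_le_mul_of_nonneg_left
      (div_mul_le_graphLap_add (hw x) (hμ x) (hD x) (hu t ht) z) (Real.exp_pos _).le

theorem volBall_mul_le_sum {G : SimpleGraph V} {x : V} {r a : ℝ} {f : V → ℝ}
    (hμ : ∀ z, 0 ≤ μ z) (hf : ∀ z, 0 ≤ f z) (ha : ∀ z, (G.dist x z : ℝ) ≤ r → a ≤ f z) :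
    volBall G μ x r * a ≤ ∑ z, μ z * f z := by
  rw [volBall, sum_mul]
  calc ∑ z ∈ univ.filter (fun z => (G.dist x z : ℝ) ≤ r), μ z * a
      ≤ ∑ z ∈ univ.filter (fun z => (G.dist x z : ℝ) ≤ r), μ z * f z :=
        sum_le_sum fun z hz => mul_le_mul_of_nonneg_left (ha z (mem_filter.1 hz).2) (hμ z)
    _ ≤ ∑ z, μ z * f z :=
        sum_le_sum_of_subset_of_nonneg (filter_subset _ _)
          fun z _ _ => mul_nonneg (hμ z) (hf z)

theorem volBall_natFloor (G : SimpleGraph V) (μ : V → ℝ) (x : V) {r : ℝ} (hr : 0 ≤ r) :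
    volBall G μ x r = volBall G μ x ⌊r⌋₊ := by
  unfold volBall
  congr 1
  exact filter_congr fun z _ => by rw [Nat.cast_le, Nat.le_floor_iff hr]

theorem volBall_pos (G : SimpleGraph V) (hμ : ∀ z, 0 < μ z) (x : V) {r : ℝ} (hr : 0 ≤ r) :
    0 < volBall G μ x r :=
  sum_pos' (fun z _ => (hμ z).le) ⟨x, by simpa using hr, hμ x⟩

theorem pow_mul_volBall_mul_le {u : ℝ → V → ℝ} {D κ s : ℝ} (hw : ∀ x z, 0 ≤ w x z)
    (hμ : ∀ x, 0 < μ x) (hD : ∀ x, (∑ z, w x z) / μ x ≤ D) {G : SimpleGraph V}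
    (hG : ∀ u v, G.Adj u v → κ ≤ w v u / μ v) (hconn : G.Connected) (hκ : 0 ≤ κ)
    (hs : 0 ≤ s) (hsκ : s * κ ≤ 1) (hu : ∀ t, 0 < t → ∀ x, 0 ≤ u t x)
    (hheat : ∀ x t, 0 < t → HasDerivAt (u · x) (graphLap w μ (u t) x) t)
    (hmass : ∀ t, 0 < t → ∑ z, μ z * u t z ≤ 1) {t : ℝ} (ht : 0 < t) (K : ℕ) (x : V) :
    (s * κ) ^ K * (volBall G μ x K * u t x) ≤ Real.exp (D * s) ^ K := by
  have hT : 0 < t + K * s := by positivity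
  have hball : ∀ z, (G.dist x z : ℝ) ≤ K →
      (s * κ) ^ K * u t x ≤ Real.exp (D * s) ^ K * u (t + K * s) z := by
    intro z hz
    have h := (derivDominatesCoupling_exp_mul hw hμ hD hu hheat).pow_mul_le_of_dist_le hconn
      hκ hG hs hsκ ht (by exact_mod_cast hz)
    rw [mul_add, Real.exp_add, mul_left_comm, mul_assoc, show D * (K * s) = K * (D * s) by ring,
      Real.exp_nat_mul] at h
    exact le_of_mul_le_mul_left h (Real.exp_pos _)
  calc (s * κ) ^ K * (volBall G μ x K * u t x)
      = volBall G μ x K * ((s * κ) ^ K * u t x) := by ring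
    _ ≤ ∑ z, μ z * (Real.exp (D * s) ^ K * u (t + K * s) z) :=
        volBall_mul_le_sum (fun z => (hμ z).le)
          (fun z => mul_nonneg (by positivity) (hu _ hT z)) hball
    _ = Real.exp (D * s) ^ K * ∑ z, μ z * u (t + K * s) z := by
        rw [mul_sum]; exact sum_congr rfl fun z _ => by ring
    _ ≤ Real.exp (D * s) ^ K := mul_le_of_le_one_right (by positivity) (hmass _ hT)

theorem volBall_sqrt_mul_le_exp {u : ℝ → V → ℝ} {D κ : ℝ} (hw : ∀ x z, 0 ≤ w x z)
    (hμ : ∀ x, 0 < μ x) (hD : ∀ x, (∑ z, w x z) / μ x ≤ D) {G : SimpleGraph V}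
    (hG : ∀ u v, G.Adj u v → κ ≤ w v u / μ v) (hconn : G.Connected) (hκ : 0 < κ)
    (hu : ∀ t, 0 < t → ∀ x, 0 ≤ u t x)
    (hheat : ∀ x t, 0 < t → HasDerivAt (u · x) (graphLap w μ (u t) x) t)
    (hmass : ∀ t, 0 < t → ∑ z, μ z * u t z ≤ 1) {t : ℝ} (ht : 0 < t) (x : V) :
    volBall G μ x √t * u t x ≤ Real.exp (2 * √(2 * D / κ) * √t) := by
  set a := √(2 * D / κ)
  set K := ⌊√t⌋₊
  have hD0 : 0 ≤ D := (div_nonneg (sum_nonneg fun z _ => hw x z) (hμ x).le).trans (hD x)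
  have hsκ : Real.exp (-a) / κ * κ = Real.exp (-a) := div_mul_cancel₀ _ hκ.ne'
  have hsκ_le : Real.exp (-a) / κ * κ ≤ 1 :=
    hsκ.trans_le (Real.exp_le_one_iff.2 (neg_nonpos.2 (Real.sqrt_nonneg _)))
  have hbound :=
    pow_mul_volBall_mul_le hw hμ hD hG hconn hκ.le (by positivity) hsκ_le hu hheat hmass ht K x
  rw [hsκ, ← volBall_natFloor _ _ _ (Real.sqrt_nonneg t)] at hbound
  have hstep : D * (Real.exp (-a) / κ) ≤ a := mul_exp_neg_sqrt_div_le hD0 hκ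
  have hK : (K : ℝ) ≤ √t := Nat.floor_le (Real.sqrt_nonneg t)
  calc volBall G μ x √t * u t x
      = Real.exp a ^ K * (Real.exp (-a) ^ K * (volBall G μ x √t * u t x)) := by
        rw [← mul_assoc, ← mul_pow, ← Real.exp_add, add_neg_cancel, Real.exp_zero, one_pow,
          one_mul]
    _ ≤ Real.exp a ^ K * Real.exp (D * (Real.exp (-a) / κ)) ^ K := by gcongr
    _ = Real.exp (K * (a + D * (Real.exp (-a) / κ))) := by
        rw [← mul_pow, ← Real.exp_add, ← Real.exp_nat_mul]
    _ ≤ Real.exp (2 * a * √t) := Real.exp_le_exp.2 <| by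
        nlinarith [Real.sqrt_nonneg (2 * D / κ), Real.sqrt_nonneg t]

end WeightedGraph

theorem heat_kernel_upper_bound_general {V : Type*} [Fintype V] [Nonempty V]
    (w : V → V → ℝ) (hw : ∀ x y, 0 ≤ w x y)
    (μ : V → ℝ) (hμ : ∀ x, 0 < μ x)
    (G : SimpleGraph V) (hadj : ∀ x y, G.Adj x y ↔ x ≠ y ∧ 0 < w x y)
    (hconn : G.Connected)
    (Dμ μmax wmin : ℝ)
    (hDμ : Dμ = Finset.univ.sup' Finset.univ_nonempty (fun z => (∑ y, w z y) / μ z))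
    (hμmax : μmax = Finset.univ.sup' Finset.univ_nonempty μ)
    (hwmin : IsLeast {r : ℝ | ∃ x y, 0 < w x y ∧ w x y = r} wmin)
    (p : ℝ → V → V → ℝ)
    (hpos : ∀ t, 0 < t → ∀ x y, 0 < p t x y)
    (hheat : ∀ y x t, 0 < t →
      HasDerivAt (fun s => p s x y) (graphLap w μ (fun z => p t z y) x) t)
    (hmass : ∀ y t, 0 < t → (∑ z, μ z * p t z y) ≤ 1)
    (t : ℝ) (ht : 0 < t) (x y : V) :
    p t x y ≤ (1 / volBall G μ x (Real.sqrt t))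
      * Real.exp (4 * Real.sqrt (2 * Dμ * μmax * t / wmin)) := by
  obtain ⟨⟨x₀, y₀, hw₀, rfl⟩, hwmin_le⟩ := hwmin
  have hμle (z : V) : μ z ≤ μmax := hμmax ▸ le_sup' μ (mem_univ z)
  have hD (z : V) : (∑ y, w z y) / μ z ≤ Dμ :=
    hDμ ▸ le_sup' (fun z => (∑ y, w z y) / μ z) (mem_univ z)
  set κ := w x₀ y₀ / μmax
  have hκ : 0 < κ := div_pos hw₀ ((hμ x).trans_le (hμle x))
  have hG (u v : V) (huv : G.Adj u v) : κ ≤ w v u / μ v :=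
    div_le_div₀ (hw v u) (hwmin_le ⟨v, u, ((hadj v u).1 huv.symm).2, rfl⟩) (hμ v) (hμle v)
  have hbound := volBall_sqrt_mul_le_exp hw hμ hD hG hconn hκ
    (fun t ht x => (hpos t ht x y).le) (fun x t => hheat y x t) (hmass y) ht x
  have hsqrt : √(2 * Dμ * μmax * t / w x₀ y₀) = √(2 * Dμ / κ) * √t := by
    rw [← Real.sqrt_mul' _ ht.le]
    congr 1
    simp only [κ]
    field_simp
  rw [one_div_mul_eq_div, le_div_iff₀ (volBall_pos G hμ x (Real.sqrt_nonneg t)), mul_comm,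
    hsqrt]
  exact hbound.trans (Real.exp_le_exp.2 (by
    linarith [mul_nonneg (Real.sqrt_nonneg (2 * Dμ / κ)) (Real.sqrt_nonneg t)]))

/-- Upper bound for the heat kernel: if `p` is positive, solves the heat equation in
`(t,x)` and satisfies `∑_z μ(z) p(t,z,y) ≤ 1`, then
`p(t,x,y) ≤ (1/Vol(B(x,√t))) exp{4√(2D_μ μ_max t / w_min)}`. -/
theorem heat_kernel_upper_bound {V : Type*} [Fintype V] [Nonempty V]
    (w : V → V → ℝ) (hw : ∀ x y, 0 ≤ w x y) (hloop : ∀ x, w x x = 0)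
    (hsymm : ∀ x y, w x y = w y x)
    (μ : V → ℝ) (hμ : ∀ x, 0 < μ x)
    (G : SimpleGraph V) (hadj : ∀ x y, G.Adj x y ↔ x ≠ y ∧ 0 < w x y)
    (hconn : G.Connected)
    (Dμ μmax wmin : ℝ)
    (hDμ : Dμ = Finset.univ.sup' Finset.univ_nonempty (fun z => (∑ y, w z y) / μ z))
    (hμmax : μmax = Finset.univ.sup' Finset.univ_nonempty μ)
    (hwmin : IsLeast {r : ℝ | ∃ x y, 0 < w x y ∧ w x y = r} wmin)
    (p : ℝ → V → V → ℝ)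
    (hpos : ∀ t, 0 < t → ∀ x y, 0 < p t x y)
    (hheat : ∀ y x t, 0 < t →
      HasDerivAt (fun s => p s x y) (graphLap w μ (fun z => p t z y) x) t)
    (hmass : ∀ y t, 0 < t → (∑ z, μ z * p t z y) ≤ 1)
    (t : ℝ) (ht : 0 < t) (x y : V) :
    p t x y ≤ (1 / volBall G μ x (Real.sqrt t))
      * Real.exp (4 * Real.sqrt (2 * Dμ * μmax * t / wmin)) :=
  heat_kernel_upper_bound_general w hw μ hμ G hadj hconn Dμ μmax wmin hDμ hμmax hwmin p hpos hheat
    hmass t ht x y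
end

section
/- Assume the weights are symmetric (w(x,y) = w(y,x)), every vertex has at least one neighbor (deg(x) > 0 for all x), and the graph with adjacency x ∼ y iff x ≠ y and w(x,y) > 0 is connected. Take the measure μ = deg. Then for every t > 0 and all x, y ∈ V, the heat kernel satisfies the lower bound p(t,x,y) ≥ (1/deg(y)) · exp{ −2t − (4μ_max/w_min) · (dist(x,y))²/t }, where μ_max = max_{x∈V} deg(x), w_min = min{w(x,y) : w(x,y) > 0}, and dist is the graph distance. -/
open Finset

/-- The iterated random-walk kernels: `p₀(x,y) = δ_{xy}` and
`p_{k+1}(x,z) = ∑_y (w(x,y)/deg(x)) p_k(y,z)`, where `deg(x) = ∑_y w(x,y)`. -/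
noncomputable def rwKernel {V : Type*} [Fintype V] [DecidableEq V]
    (w : V → V → ℝ) : ℕ → V → V → ℝ
  | 0 => fun x y => if x = y then 1 else 0
  | (k + 1) => fun x z => ∑ y, (w x y / ∑ y', w x y') * rwKernel w k y z

/-- The heat kernel on a finite weighted graph:
`p(t,x,y) = e^{-t} ∑_k (t^k/k!) p_k(x,y)/deg(y)`. -/
noncomputable def heatKernel {V : Type*} [Fintype V] [DecidableEq V]
    (w : V → V → ℝ) (t : ℝ) (x y : V) : ℝ :=
  Real.exp (-t) * ∑' k : ℕ, t ^ k / (Nat.factorial k) * rwKernel w k x y / (∑ z, w y z)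

/-!
The heat kernel dominates each term of its series; take the term `k = d = dist(x,y)`.
Along a geodesic each step has transition probability `w(a,b)/deg(a) ≥ c := w_min/μ_max`,
so `p_d(x,y) ≥ c^d`. It remains to see that `e^{-t} t^d c^d / d!` beats the Gaussian
bound, which follows from `d! ≤ d^d` and `u ≤ e^{u-1}` with `u = d/(ct)`:
`d!/(ct)^d ≤ (d/(ct))^d ≤ e^{d²/(ct)}`.
-/

section RandomWalk

variable {V : Type*} [Fintype V] [DecidableEq V] {w : V → V → ℝ}

theorem rwKernel_nonneg (hw : ∀ x y, 0 ≤ w x y) (k : ℕ) (x y : V) :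
    0 ≤ rwKernel w k x y := by
  induction k generalizing x with
  | zero => simp only [rwKernel]; split <;> norm_num
  | succ k ih =>
    exact sum_nonneg fun z _ =>
      mul_nonneg (div_nonneg (hw x z) (sum_nonneg fun _ _ => hw x _)) (ih z)

theorem sum_rwKernel_eq_one (hdeg : ∀ x, 0 < ∑ y, w x y) (k : ℕ) (x : V) :
    ∑ z, rwKernel w k x z = 1 := by
  induction k generalizing x with
  | zero => simp [rwKernel]
  | succ k ih =>
    simp only [rwKernel]
    rw [sum_comm]
    simp_rw [← mul_sum, ih, mul_one]
    rw [← sum_div, div_self (hdeg x).ne']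

theorem rwKernel_le_one (hw : ∀ x y, 0 ≤ w x y) (hdeg : ∀ x, 0 < ∑ y, w x y)
    (k : ℕ) (x y : V) : rwKernel w k x y ≤ 1 :=
  sum_rwKernel_eq_one hdeg k x ▸
    single_le_sum (fun z _ => rwKernel_nonneg hw k x z) (mem_univ y)

theorem pow_length_le_rwKernel {G : SimpleGraph V} (hw : ∀ x y, 0 ≤ w x y) {c : ℝ}
    (hc₀ : 0 ≤ c) (hc : ∀ a b, G.Adj a b → c ≤ w a b / ∑ z, w a z)
    {x y : V} (W : G.Walk x y) : c ^ W.length ≤ rwKernel w W.length x y := by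
  induction W with
  | nil => simp [rwKernel]
  | @cons a b _ hab W ih =>
    have hpab : 0 ≤ w a b / ∑ z, w a z :=
      div_nonneg (hw a b) (sum_nonneg fun _ _ => hw a _)
    calc c ^ (W.cons hab).length = c * c ^ W.length := by
          rw [SimpleGraph.Walk.length_cons, pow_succ']
      _ ≤ (w a b / ∑ z, w a z) * rwKernel w W.length b _ :=
          mul_le_mul (hc a b hab) ih (by positivity) hpab
      _ ≤ rwKernel w (W.cons hab).length a _ :=
          single_le_sum (f := fun z => (w a z / ∑ y', w a y') * rwKernel w W.length z _)
            (fun z _ => mul_nonneg (div_nonneg (hw a z) (sum_nonneg fun _ _ => hw a _))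
              (rwKernel_nonneg hw _ z _)) (mem_univ b)

theorem summable_heatKernel_series (hw : ∀ x y, 0 ≤ w x y) (hdeg : ∀ x, 0 < ∑ y, w x y)
    {t : ℝ} (ht : 0 ≤ t) (x y : V) :
    Summable fun k : ℕ => t ^ k / k.factorial * rwKernel w k x y / ∑ z, w y z := by
  refine .of_nonneg_of_le (fun k => ?_) (fun k => ?_)
    ((Real.summable_pow_div_factorial t).div_const (∑ z, w y z))
  · have := rwKernel_nonneg hw k x y
    have := hdeg y
    positivity
  · have := hdeg y
    gcongr
    exact mul_le_of_le_one_right (by positivity) (rwKernel_le_one hw hdeg k x y)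

theorem term_le_heatKernel (hw : ∀ x y, 0 ≤ w x y) (hdeg : ∀ x, 0 < ∑ y, w x y)
    {t : ℝ} (ht : 0 ≤ t) (x y : V) (k : ℕ) :
    Real.exp (-t) * (t ^ k / k.factorial * rwKernel w k x y / ∑ z, w y z) ≤
      heatKernel w t x y := by
  have := hdeg y
  refine mul_le_mul_of_nonneg_left ?_ (Real.exp_nonneg _)
  exact (summable_heatKernel_series hw hdeg ht x y).le_tsum k fun j _ => by
    have := rwKernel_nonneg hw j x y
    positivity

end RandomWalk

theorem exp_neg_sq_div_le_pow_div_factorial {s : ℝ} (hs : 0 < s) (d : ℕ) :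
    Real.exp (-((d : ℝ) ^ 2 / s)) ≤ s ^ d / d.factorial := by
  have hpow : ((d : ℝ) / s) ^ d ≤ Real.exp ((d : ℝ) ^ 2 / s) := calc
    ((d : ℝ) / s) ^ d ≤ Real.exp (d / s - 1) ^ d := by
        gcongr
        linarith [Real.add_one_le_exp ((d : ℝ) / s - 1)]
    _ = Real.exp (d * (d / s - 1)) := by rw [← Real.exp_nat_mul]
    _ ≤ Real.exp ((d : ℝ) ^ 2 / s) := by
        gcongr
        rw [mul_sub, mul_one, ← mul_div_assoc, sq]
        linarith [(d.cast_nonneg : (0 : ℝ) ≤ d)]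
  have hfac : (d.factorial : ℝ) ≤ (d : ℝ) ^ d := by exact_mod_cast d.factorial_le_pow
  rw [Real.exp_neg, inv_le_iff_one_le_mul₀' (Real.exp_pos _), ← mul_div_assoc,
    le_div_iff₀ (by positivity), one_mul]
  rw [div_pow, div_le_iff₀ (by positivity)] at hpow
  calc (d.factorial : ℝ) ≤ (d : ℝ) ^ d := hfac
    _ ≤ Real.exp ((d : ℝ) ^ 2 / s) * s ^ d := hpow

theorem exp_neg_two_mul_sub_le_exp_neg_mul_pow_div_factorial {c t : ℝ} (hc : 0 < c)
    (ht : 0 < t) (d : ℕ) :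
    Real.exp (-2 * t - 4 / c * (d : ℝ) ^ 2 / t) ≤
      Real.exp (-t) * (t ^ d / d.factorial * c ^ d) := calc
  Real.exp (-2 * t - 4 / c * (d : ℝ) ^ 2 / t)
      ≤ Real.exp (-t + -((d : ℝ) ^ 2 / (c * t))) := by
        gcongr
        have : 0 ≤ (d : ℝ) ^ 2 / (c * t) := by positivity
        have : 4 / c * (d : ℝ) ^ 2 / t = 4 * ((d : ℝ) ^ 2 / (c * t)) := by
          field_simp
        linarith
  _ ≤ Real.exp (-t) * ((c * t) ^ d / d.factorial) := by
        rw [Real.exp_add]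
        gcongr
        exact exp_neg_sq_div_le_pow_div_factorial (by positivity) d
  _ = Real.exp (-t) * (t ^ d / d.factorial * c ^ d) := by ring

theorem heat_kernel_lower_bound_general {V : Type*} [Fintype V] [Nonempty V] [DecidableEq V]
    (w : V → V → ℝ) (hw : ∀ x y, 0 ≤ w x y)
    (hdeg : ∀ x, 0 < ∑ y, w x y)
    (G : SimpleGraph V) (hadj : ∀ x y, G.Adj x y ↔ x ≠ y ∧ 0 < w x y)
    (hconn : G.Connected)
    (μmax wmin : ℝ)
    (hμmax : μmax = Finset.univ.sup' Finset.univ_nonempty (fun x => ∑ y, w x y))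
    (hwmin : IsLeast {r : ℝ | ∃ x y, 0 < w x y ∧ w x y = r} wmin)
    (t : ℝ) (ht : 0 < t) (x y : V) :
    heatKernel w t x y ≥ (1 / (∑ z, w y z))
      * Real.exp (-2 * t - (4 * μmax / wmin) * (G.dist x y : ℝ) ^ 2 / t) := by
  obtain ⟨⟨a₀, b₀, hwab₀, rfl⟩, hwmin_le⟩ := hwmin
  have hdeg_le : ∀ a, ∑ z, w a z ≤ μmax := fun a => hμmax ▸ le_sup' (fun x => ∑ y, w x y) (mem_univ a)
  have hc₀ : 0 < w a₀ b₀ / μmax := div_pos hwab₀ ((hdeg a₀).trans_le (hdeg_le a₀))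
  have hc : ∀ a b, G.Adj a b → w a₀ b₀ / μmax ≤ w a b / ∑ z, w a z := fun a b hab =>
    div_le_div₀ (hw a b) (hwmin_le ⟨a, b, ((hadj a b).1 hab).2, rfl⟩) (hdeg a) (hdeg_le a)
  obtain ⟨W, hW⟩ := hconn.exists_walk_length_eq_dist x y
  have hp := hW ▸ pow_length_le_rwKernel hw hc₀.le hc W
  have := hdeg y
  calc (1 / ∑ z, w y z) * Real.exp (-2 * t - 4 * μmax / w a₀ b₀ * (G.dist x y : ℝ) ^ 2 / t)
      ≤ (1 / ∑ z, w y z) * (Real.exp (-t) * (t ^ G.dist x y / (G.dist x y).factorial *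
          (w a₀ b₀ / μmax) ^ G.dist x y)) := by
        rw [← div_div_eq_mul_div 4 (w a₀ b₀) μmax]
        gcongr
        exact exp_neg_two_mul_sub_le_exp_neg_mul_pow_div_factorial hc₀ ht _
    _ ≤ Real.exp (-t) * (t ^ G.dist x y / (G.dist x y).factorial *
          rwKernel w (G.dist x y) x y / ∑ z, w y z) := by
        rw [one_div_mul_eq_div, mul_div_assoc]
        gcongr
    _ ≤ heatKernel w t x y := term_le_heatKernel hw hdeg ht.le x y _

/-- Lower bound for the heat kernel on a finite connected weighted graph with
measure `μ = deg`: for all `t > 0`,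
`p(t,x,y) ≥ (1/deg(y)) exp{-2t - (4μ_max/w_min) dist(x,y)²/t}`,
where `μ_max = max_x deg(x)` and `w_min = min{w(x,y) : w(x,y) > 0}`. -/
theorem heat_kernel_lower_bound {V : Type*} [Fintype V] [Nonempty V] [DecidableEq V]
    (w : V → V → ℝ) (hw : ∀ x y, 0 ≤ w x y) (hloop : ∀ x, w x x = 0)
    (hsymm : ∀ x y, w x y = w y x)
    (hdeg : ∀ x, 0 < ∑ y, w x y)
    (G : SimpleGraph V) (hadj : ∀ x y, G.Adj x y ↔ x ≠ y ∧ 0 < w x y)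
    (hconn : G.Connected)
    (μmax wmin : ℝ)
    (hμmax : μmax = Finset.univ.sup' Finset.univ_nonempty (fun x => ∑ y, w x y))
    (hwmin : IsLeast {r : ℝ | ∃ x y, 0 < w x y ∧ w x y = r} wmin)
    (t : ℝ) (ht : 0 < t) (x y : V) :
    heatKernel w t x y ≥ (1 / (∑ z, w y z))
      * Real.exp (-2 * t - (4 * μmax / wmin) * (G.dist x y : ℝ) ^ 2 / t) :=
  heat_kernel_lower_bound_general w hw hdeg G hadj hconn μmax wmin hμmax hwmin t ht x y
end

section
/- Assume the weights are symmetric (w(x,y) = w(y,x)), every vertex has at least one neighbor (deg(x) > 0 for all x), and the graph with adjacency x ∼ y iff x ≠ y and w(x,y) > 0 is connected. Take the measure μ = deg and set Vol(B(y,r)) = ∑_{z : dist(y,z) ≤ r} deg(z), where dist is the graph distance. Then for every y ∈ V and every t > 0: Vol(B(y,√t)) ≤ Vol(B(y,1)) · exp{ t + 4√(2 μ_max t / w_min) }, where μ_max = max_{x∈V} deg(x) and w_min = min{w(x,y) : w(x,y) > 0}. -/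
open Finset

open scoped Classical in
/-- The volume of the ball `B(y,r)` with respect to the measure `μ = deg` and the
graph distance of `G`: `Vol(B(y,r)) = ∑_{z : dist(y,z) ≤ r} deg(z)`. -/
noncomputable def volBallDeg {V : Type*} [Fintype V] (G : SimpleGraph V)
    (w : V → V → ℝ) (y : V) (r : ℝ) : ℝ :=
  ∑ z ∈ Finset.univ.filter (fun z => (G.dist y z : ℝ) ≤ r), ∑ y', w z y'

/-! Every vertex has at most `D = μ_max / w_min` neighbours, so the sphere of radius `k` around
`y` has at most `D ^ k` vertices and, with `n = ⌊√t⌋`, the ball of radius `√t` has volume at most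
`(n + 1) D ^ n μ_max = w_min (n + 1) D ^ (n + 1)`. As `Vol(B(y,1)) ≥ deg y ≥ w_min`, it remains to
see `(n + 1) D ^ (n + 1) ≤ exp (t + 4 √(D t))` for `t ≥ 1`, which follows from `n + 1 ≤ 2 √t ≤ e ^ t`
and `log D ≤ 2 √D`. For `t < 1` the ball of radius `√t` lies in the ball of radius `1`. -/

namespace SimpleGraph

variable {V : Type*} {G : SimpleGraph V}

theorem Connected.exists_adj_dist_eq_of_dist_eq_succ (hconn : G.Connected) {y z : V} {k : ℕ}
    (hz : G.dist y z = k + 1) : ∃ x, G.Adj x z ∧ G.dist y x = k := by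
  obtain ⟨p, hp⟩ := hconn.exists_walk_length_eq_dist z y
  cases p with
  | nil => simp at hz
  | @cons _ x _ hzx q =>
    rw [Walk.length_cons, dist_comm, hz, Nat.add_right_cancel_iff] at hp
    have hxy : G.dist y x ≤ k := dist_comm (G := G) ▸ hp ▸ dist_le q
    have htri := hconn.dist_triangle (u := y) (v := x) (w := z)
    rw [dist_eq_one_iff_adj.2 hzx.symm] at htri
    exact ⟨x, hzx.symm, by omega⟩

variable [Fintype V] [DecidableRel G.Adj]

theorem Connected.card_filter_dist_eq_le (hconn : G.Connected) (y : V) (k : ℕ) :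
    #{z | G.dist y z = k} ≤ G.maxDegree ^ k := by
  classical
  induction k with
  | zero =>
    have : ({z | G.dist y z = 0} : Finset V) = {y} := by
      ext z; simp [hconn.dist_eq_zero_iff, eq_comm]
    rw [this, card_singleton, pow_zero]
  | succ k ih =>
    have hstep : ({z | G.dist y z = k + 1} : Finset V) ⊆
        ({x | G.dist y x = k} : Finset V).biUnion (G.neighborFinset ·) := by
      intro z hz
      obtain ⟨x, hxz, hx⟩ := hconn.exists_adj_dist_eq_of_dist_eq_succ (mem_filter.1 hz).2
      exact mem_biUnion.2 ⟨x, by simpa using hx, (G.mem_neighborFinset x z).2 hxz⟩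
    calc #{z | G.dist y z = k + 1}
        ≤ #{x | G.dist y x = k} * G.maxDegree :=
          (card_le_card hstep).trans <| card_biUnion_le_card_mul _ _ _ fun x _ =>
            (G.card_neighborFinset_eq_degree x).trans_le (G.degree_le_maxDegree x)
      _ ≤ G.maxDegree ^ (k + 1) := by rw [pow_succ]; gcongr

theorem Connected.card_filter_dist_le_le (hconn : G.Connected) (y : V) (n : ℕ) :
    #{z | G.dist y z ≤ n} ≤ ∑ k ∈ range (n + 1), G.maxDegree ^ k := by
  classical
  have hcover : ({z | G.dist y z ≤ n} : Finset V) ⊆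
      (range (n + 1)).biUnion fun k => ({z | G.dist y z = k} : Finset V) := by
    intro z hz
    exact mem_biUnion.2 ⟨G.dist y z, mem_range.2 (Nat.lt_succ_of_le (mem_filter.1 hz).2),
      by simp⟩
  exact (card_le_card hcover).trans <| card_biUnion_le.trans <|
    sum_le_sum fun k _ => hconn.card_filter_dist_eq_le y k

end SimpleGraph

theorem sum_range_pow_le_mul_pow {a D : ℝ} (ha : 0 ≤ a) (haD : a ≤ D) (hD : 1 ≤ D) (n : ℕ) :
    ∑ k ∈ range (n + 1), a ^ k ≤ (n + 1) * D ^ n := by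
  calc ∑ k ∈ range (n + 1), a ^ k ≤ ∑ _k ∈ range (n + 1), D ^ n :=
        sum_le_sum fun k hk => (pow_le_pow_left₀ ha haD k).trans <|
          pow_le_pow_right₀ hD (Nat.lt_succ_iff.1 (mem_range.1 hk))
    _ = (n + 1) * D ^ n := by simp

theorem Real.log_le_two_mul_sqrt {x : ℝ} (hx : 0 ≤ x) : Real.log x ≤ 2 * √x := by
  have := Real.log_le_rpow_div hx (ε := 1 / 2) (by norm_num)
  rwa [← Real.sqrt_eq_rpow, div_eq_mul_inv, one_div, inv_inv, mul_comm] at this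

theorem succ_mul_pow_succ_le_exp {D s : ℝ} {n : ℕ} (hD : 1 ≤ D) (hs : 1 ≤ s) (hn : (n : ℝ) ≤ s) :
    (n + 1) * D ^ (n + 1) ≤ Real.exp (s ^ 2 + 4 * (s * √D)) := by
  have hn2 : (n : ℝ) + 1 ≤ 2 * s := by linarith
  have hfactor : (n : ℝ) + 1 ≤ Real.exp (s ^ 2) :=
    hn2.trans <| by nlinarith [Real.add_one_le_exp (s ^ 2)]
  have hlog : ((n + 1 : ℕ) : ℝ) * Real.log D ≤ 4 * (s * √D) :=
    calc ((n + 1 : ℕ) : ℝ) * Real.log D ≤ (2 * s) * (2 * √D) := by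
          push_cast
          exact mul_le_mul hn2 (Real.log_le_two_mul_sqrt (by linarith)) (Real.log_nonneg hD)
            (by positivity)
      _ = 4 * (s * √D) := by ring
  have hpow : D ^ (n + 1) ≤ Real.exp (4 * (s * √D)) :=
    calc D ^ (n + 1) = Real.exp (((n + 1 : ℕ) : ℝ) * Real.log D) := by
          rw [Real.exp_nat_mul, Real.exp_log (by linarith)]
      _ ≤ Real.exp (4 * (s * √D)) := Real.exp_le_exp.2 hlog
  rw [Real.exp_add]
  exact mul_le_mul hfactor hpow (by positivity) (Real.exp_pos _).le

section WeightedGraph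

variable {V : Type*} [Fintype V] {G : SimpleGraph V} {w : V → V → ℝ}

theorem degree_mul_le_sum_weight [DecidableRel G.Adj] (hw : ∀ x y, 0 ≤ w x y) {c : ℝ}
    (hc : ∀ x y, G.Adj x y → c ≤ w x y) (x : V) : G.degree x * c ≤ ∑ y, w x y :=
  calc G.degree x * c = ∑ _y ∈ G.neighborFinset x, c := by
        rw [sum_const, G.card_neighborFinset_eq_degree, nsmul_eq_mul]
    _ ≤ ∑ y ∈ G.neighborFinset x, w x y :=
        sum_le_sum fun y hy => hc x y ((G.mem_neighborFinset x y).1 hy)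
    _ ≤ ∑ y, w x y := sum_le_sum_of_subset_of_nonneg (subset_univ _) fun y _ _ => hw x y

theorem volBallDeg_mono (hw : ∀ x y, 0 ≤ w x y) (y : V) {r₁ r₂ : ℝ} (hr : r₁ ≤ r₂) :
    volBallDeg G w y r₁ ≤ volBallDeg G w y r₂ :=
  sum_le_sum_of_subset_of_nonneg (monotone_filter_right _ fun _ _ h => h.trans hr)
    fun x _ _ => sum_nonneg fun z _ => hw x z

theorem sum_weight_le_volBallDeg (hw : ∀ x y, 0 ≤ w x y) (y : V) {r : ℝ} (hr : 0 ≤ r) :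
    ∑ z, w y z ≤ volBallDeg G w y r :=
  single_le_sum (f := fun x => ∑ z, w x z) (fun x _ => sum_nonneg fun z _ => hw x z)
    (by simpa using hr)

theorem volBallDeg_le_sum_pow_maxDegree_mul [DecidableRel G.Adj] (hconn : G.Connected)
    (hw : ∀ x y, 0 ≤ w x y) {M : ℝ} (hM : ∀ x, ∑ z, w x z ≤ M) (y : V) {r : ℝ} (hr : 0 ≤ r) :
    volBallDeg G w y r ≤ (∑ k ∈ range (⌊r⌋₊ + 1), (G.maxDegree : ℝ) ^ k) * M := by
  have hball : univ.filter (fun z => (G.dist y z : ℝ) ≤ r) =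
      univ.filter (fun z => G.dist y z ≤ ⌊r⌋₊) :=
    filter_congr fun z _ => (Nat.le_floor_iff hr).symm
  calc volBallDeg G w y r ≤ ∑ _z ∈ univ.filter (fun z => (G.dist y z : ℝ) ≤ r), M :=
        sum_le_sum fun z _ => hM z
    _ = #{z | G.dist y z ≤ ⌊r⌋₊} * M := by rw [sum_const, hball, nsmul_eq_mul]
    _ ≤ (∑ k ∈ range (⌊r⌋₊ + 1), (G.maxDegree : ℝ) ^ k) * M := by
        gcongr
        · exact (sum_nonneg fun z _ => hw y z).trans (hM y)
        · exact_mod_cast hconn.card_filter_dist_le_le y _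

theorem le_sum_weight_of_pos (hw : ∀ x y, 0 ≤ w x y) {c : ℝ} (hc : ∀ x y, 0 < w x y → c ≤ w x y)
    {x : V} (hx : 0 < ∑ y, w x y) : c ≤ ∑ y, w x y := by
  obtain ⟨z, -, hz⟩ := exists_lt_of_sum_lt (by simpa using hx : ∑ _y : V, (0 : ℝ) < ∑ y, w x y)
  exact (hc x z hz).trans (single_le_sum (fun y _ => hw x y) (mem_univ z))

theorem volBallDeg_sqrt_le_mul_exp (hconn : G.Connected) (hw : ∀ x y, 0 ≤ w x y) {c M : ℝ}
    (hc0 : 0 < c) (hc : ∀ x y, G.Adj x y → c ≤ w x y) (hM : ∀ x, ∑ z, w x z ≤ M) (hcM : c ≤ M)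
    (y : V) {t : ℝ} (ht : 1 ≤ t) :
    volBallDeg G w y √t ≤ c * Real.exp (t + 4 * √(M * t / c)) := by
  classical
  set D := M / c
  have hD : 1 ≤ D := (one_le_div hc0).2 hcM
  have hmaxDegree : (G.maxDegree : ℝ) ≤ D := by
    have : Nonempty V := ⟨y⟩
    obtain ⟨x, hx⟩ := G.exists_maximal_degree_vertex
    rw [le_div_iff₀ hc0, hx]
    exact (degree_mul_le_sum_weight hw hc x).trans (hM x)
  have hs : 1 ≤ √t := Real.one_le_sqrt.2 ht
  set n := ⌊√t⌋₊
  calc volBallDeg G w y √t ≤ (∑ k ∈ range (n + 1), (G.maxDegree : ℝ) ^ k) * M :=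
        volBallDeg_le_sum_pow_maxDegree_mul hconn hw hM y (by positivity)
    _ ≤ ((n + 1) * D ^ n) * M := by
        gcongr
        · linarith
        · exact sum_range_pow_le_mul_pow (by positivity) hmaxDegree hD n
    _ = c * ((n + 1) * D ^ (n + 1)) := by
        rw [pow_succ, show M = c * D from (mul_div_cancel₀ M hc0.ne').symm]; ring
    _ ≤ c * Real.exp (√t ^ 2 + 4 * (√t * √D)) := by
        gcongr
        exact succ_mul_pow_succ_le_exp hD hs (Nat.floor_le (by positivity))
    _ = c * Real.exp (t + 4 * √(M * t / c)) := by
        rw [Real.sq_sqrt (by linarith), ← Real.sqrt_mul (by linarith), mul_div_right_comm,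
          mul_comm t]

end WeightedGraph

theorem volume_growth_general {V : Type*} [Fintype V] [Nonempty V]
    (w : V → V → ℝ) (hw : ∀ x y, 0 ≤ w x y)
    (hdeg : ∀ x, 0 < ∑ y, w x y)
    (G : SimpleGraph V) (hadj : ∀ x y, G.Adj x y ↔ x ≠ y ∧ 0 < w x y)
    (hconn : G.Connected)
    (μmax wmin : ℝ)
    (hμmax : μmax = Finset.univ.sup' Finset.univ_nonempty (fun x => ∑ y, w x y))
    (hwmin : IsLeast {r : ℝ | ∃ x y, 0 < w x y ∧ w x y = r} wmin)
    (y : V) (t : ℝ) (ht : 0 < t) :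
    volBallDeg G w y (Real.sqrt t)
      ≤ volBallDeg G w y 1 * Real.exp (t + 4 * Real.sqrt (2 * μmax * t / wmin)) := by
  have hwmin_pos : 0 < wmin := by
    obtain ⟨_, _, h, rfl⟩ := hwmin.1
    exact h
  have hwmin_le_deg : ∀ x, wmin ≤ ∑ z, w x z :=
    fun x => le_sum_weight_of_pos hw (fun x z h => hwmin.2 ⟨x, z, h, rfl⟩) (hdeg x)
  have hμmax_ge : ∀ x, ∑ z, w x z ≤ μmax :=
    fun x => hμmax ▸ le_sup' (fun x => ∑ z, w x z) (mem_univ x)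
  have hwmin_le_μmax : wmin ≤ μmax := (hwmin_le_deg y).trans (hμmax_ge y)
  have hvol₁ : wmin ≤ volBallDeg G w y 1 :=
    (hwmin_le_deg y).trans (sum_weight_le_volBallDeg hw y zero_le_one)
  rcases le_or_gt 1 t with h1t | ht1
  · calc volBallDeg G w y √t ≤ wmin * Real.exp (t + 4 * √(μmax * t / wmin)) :=
          volBallDeg_sqrt_le_mul_exp hconn hw hwmin_pos
            (fun x z h => hwmin.2 ⟨x, z, ((hadj x z).1 h).2, rfl⟩) hμmax_ge hwmin_le_μmax y h1t
      _ ≤ _ := by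
          gcongr
          · exact hwmin_pos.le.trans hvol₁
          · linarith
  · have hexp : 1 ≤ Real.exp (t + 4 * √(2 * μmax * t / wmin)) := Real.one_le_exp (by positivity)
    calc volBallDeg G w y √t ≤ volBallDeg G w y 1 :=
          volBallDeg_mono hw y (Real.sqrt_le_one.2 ht1.le)
      _ ≤ _ := le_mul_of_one_le_right (hwmin_pos.le.trans hvol₁) hexp

/-- Volume growth of balls on a finite connected weighted graph with `μ = deg`:
`Vol(B(y,√t)) ≤ Vol(B(y,1)) exp{t + 4√(2μ_max t / w_min)}`. -/
theorem volume_growth {V : Type*} [Fintype V] [Nonempty V]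
    (w : V → V → ℝ) (hw : ∀ x y, 0 ≤ w x y) (hloop : ∀ x, w x x = 0)
    (hsymm : ∀ x y, w x y = w y x)
    (hdeg : ∀ x, 0 < ∑ y, w x y)
    (G : SimpleGraph V) (hadj : ∀ x y, G.Adj x y ↔ x ≠ y ∧ 0 < w x y)
    (hconn : G.Connected)
    (μmax wmin : ℝ)
    (hμmax : μmax = Finset.univ.sup' Finset.univ_nonempty (fun x => ∑ y, w x y))
    (hwmin : IsLeast {r : ℝ | ∃ x y, 0 < w x y ∧ w x y = r} wmin)
    (y : V) (t : ℝ) (ht : 0 < t) :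
    volBallDeg G w y (Real.sqrt t)
      ≤ volBallDeg G w y 1 * Real.exp (t + 4 * Real.sqrt (2 * μmax * t / wmin)) :=
  volume_growth_general w hw hdeg G hadj hconn μmax wmin hμmax hwmin y t ht
end
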